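/- arXiv:2204.08964 — 7 statements merged into one kernel-verified Lean document; each statement's English description precedes it below -/
import Mathlib

section
/- Let U be a unitary on ℂ^d ⊗ ℂ^k, χ ∈ ℂ^k a unit vector, and suppose the associated transition operator T(ρ) = Tr_u(U(ρ⊗|χ⟩⟨χ|)U*) has a full-rank stationary state ρ_ss = Σ_i λ_i |f_i⟩⟨f_i| (spectral decomposition). Then there exists a unitary V on ℂ^d ⊗ ℂ^k (the absorber space tensor the noise unit) such that, writing W = (1⊗V)(U⊗1) as operators on ℂ^d ⊗ ℂ^d ⊗ ℂ^k (system ⊗ absorber ⊗ noise unit, with appropriate ampliations) and |ψ̃⟩ = Σ_i √λ_i |f_i⟩⊗|f_i⟩ ∈ ℂ^d ⊗ ℂ^d, one has W(|ψ̃⟩⊗|χ⟩) = |ψ̃⟩⊗|χ⟩. Consequently, for every n, applying the n-step dynamics W^(n)···W^(1) (where W^(j) acts on system+absorber and the j-th of n noise units) to |ψ̃⟩⊗|χ⟩^⊗n leaves this vector invariant, so the n-step output state equals the input state |χ⟩^⊗n. -/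
open scoped BigOperators Matrix Kronecker ComplexConjugate Classical
open Matrix

noncomputable section

/-- Inner product on `ι → ℂ`, conjugate-linear in the first argument. -/
def inn {ι : Type*} [Fintype ι] (v w : ι → ℂ) : ℂ := ∑ i, conj (v i) * w i

/-- Squared norm on `ι → ℂ`. -/
def nsq {ι : Type*} [Fintype ι] (v : ι → ℂ) : ℝ := ∑ i, Complex.normSq (v i)

/-- Tensor product of two vectors. -/
def vtens {α β : Type*} (v : α → ℂ) (w : β → ℂ) : α × β → ℂ := fun p => v p.1 * w p.2

/-- `n`-fold tensor power of a vector. -/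
def vpow {ι : Type*} (n : ℕ) (χ : ι → ℂ) : (Fin n → ι) → ℂ := fun g => ∏ j, χ (g j)

/-- Outer product `|v⟩⟨w|`. -/
def outer {α : Type*} (v w : α → ℂ) : Matrix α α ℂ := fun x y => v x * conj (w y)

/-- Ampliation of an operator on system ⊗ (single noise unit) to system ⊗ (n noise units),
acting on the `j`-th noise unit. -/
def amp {α ι : Type*} [DecidableEq ι] (n : ℕ) (W : Matrix (α × ι) (α × ι) ℂ) (j : Fin n) :
    Matrix (α × (Fin n → ι)) (α × (Fin n → ι)) ℂ :=
  fun p q => if ∀ l, l ≠ j → p.2 l = q.2 l then W (p.1, p.2 j) (q.1, q.2 j) else 0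

/-- The `n`-step unitary `W⁽ⁿ⁾ ⋯ W⁽²⁾ W⁽¹⁾`. -/
def steps {α ι : Type*} [Fintype α] [Fintype ι] [DecidableEq α] [DecidableEq ι]
    (n : ℕ) (W : Matrix (α × ι) (α × ι) ℂ) :
    Matrix (α × (Fin n → ι)) (α × (Fin n → ι)) ℂ :=
  ((List.ofFn fun j : Fin n => amp n W j).reverse).prod

/-- Partial trace over the noise unit. -/
def ptraceNoise {α ι : Type*} [Fintype ι] (A : Matrix (α × ι) (α × ι) ℂ) : Matrix α α ℂ :=
  fun s t => ∑ u, A (s, u) (t, u)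

/-- Transition operator `T(ρ) = Tr_u (U (ρ ⊗ |χ⟩⟨χ|) U*)`. -/
def tmap {α ι : Type*} [Fintype α] [Fintype ι] (U : Matrix (α × ι) (α × ι) ℂ) (χ : ι → ℂ)
    (ρ : Matrix α α ℂ) : Matrix α α ℂ :=
  ptraceNoise (U * (ρ ⊗ₖ outer χ χ) * Uᴴ)

/-- Ampliation `U ⊗ 1` of the system-noise unitary `U`, acting trivially on the absorber
(second `Fin d` factor): indices are `((system, absorber), noise)`. -/
def ampSys {d k : ℕ} (U : Matrix (Fin d × Fin k) (Fin d × Fin k) ℂ) :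
    Matrix ((Fin d × Fin d) × Fin k) ((Fin d × Fin d) × Fin k) ℂ :=
  fun p q => if p.1.2 = q.1.2 then U (p.1.1, p.2) (q.1.1, q.2) else 0

/-- Ampliation `1 ⊗ V` of the absorber-noise unitary `V`, acting trivially on the system
(first `Fin d` factor). -/
def ampAbs {d k : ℕ} (V : Matrix (Fin d × Fin k) (Fin d × Fin k) ℂ) :
    Matrix ((Fin d × Fin d) × Fin k) ((Fin d × Fin d) × Fin k) ℂ :=
  fun p q => if p.1.1 = q.1.1 then V (p.1.2, p.2) (q.1.2, q.2) else 0

/-!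
Both `ψ̃ ⊗ χ` and `(U ⊗ 1)(ψ̃ ⊗ χ)` are vectors in system ⊗ (absorber ⊗ noise) whose reduced
state on the system is `ρ_ss`: for the first because `ψ̃` purifies `ρ_ss` and `‖χ‖ = 1`, for the
second because that reduced state is `T(ρ_ss) = ρ_ss`. Two purifications of the same state on a
common purifying space differ by a unitary on that space: their slices along the system have the
same Gram matrix, and the isometry between the spans of two families with equal Gram matrices
extends to a unitary. That unitary is `V`. Every factor of the `n`-step dynamics acts as `W` on one
copy of `χ`, so it also fixes `ψ̃ ⊗ χ^⊗n`.
-/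

section GramUnitary

variable {𝕜 E ι : Type*} [RCLike 𝕜] [NormedAddCommGroup E] [InnerProductSpace 𝕜 E] [Fintype ι]

theorem inner_linearCombination_eq_of_inner_eq {v w : ι → E}
    (h : ∀ i j, inner 𝕜 (v i) (v j) = inner 𝕜 (w i) (w j)) (c c' : ι → 𝕜) :
    inner 𝕜 (Fintype.linearCombination 𝕜 v c) (Fintype.linearCombination 𝕜 v c') =
      inner 𝕜 (Fintype.linearCombination 𝕜 w c) (Fintype.linearCombination 𝕜 w c') := by
  simp [Fintype.linearCombination_apply, sum_inner, inner_sum, inner_smul_left,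
    inner_smul_right, h]

theorem exists_linearIsometry_apply_eq_of_inner_eq [FiniteDimensional 𝕜 E] {v w : ι → E}
    (h : ∀ i j, inner 𝕜 (v i) (v j) = inner 𝕜 (w i) (w j)) :
    ∃ L : E →ₗᵢ[𝕜] E, ∀ i, L (v i) = w i := by
  set lv := Fintype.linearCombination 𝕜 v
  set lw := Fintype.linearCombination 𝕜 w
  have norm_eq (c : ι → 𝕜) : ‖lw c‖ = ‖lv c‖ := by
    rw [← sq_eq_sq₀ (norm_nonneg _) (norm_nonneg _), ← inner_self_eq_norm_sq (𝕜 := 𝕜),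
      ← inner_self_eq_norm_sq (𝕜 := 𝕜), inner_linearCombination_eq_of_inner_eq h]
  have lw_eq_of_lv_eq {c c' : ι → 𝕜} (hc : lv c = lv c') : lw c = lw c' := by
    rw [← sub_eq_zero, ← map_sub, ← norm_eq_zero, norm_eq, map_sub, hc, sub_self, norm_zero]
  obtain ⟨g, hg⟩ := lv.rangeRestrict.exists_rightInverse_of_surjective lv.range_rangeRestrict
  have lv_g (x : LinearMap.range lv) : lv (g x) = x :=
    congrArg Subtype.val (LinearMap.congr_fun hg x)
  let L₀ : LinearMap.range lv →ₗᵢ[𝕜] E :=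
    { toLinearMap := lw ∘ₗ g
      norm_map' := fun x => by simp [norm_eq, lv_g] }
  refine ⟨L₀.extend, fun i => ?_⟩
  have hvi : lv (Pi.single i 1) = v i := by simp [lv]
  have hwi : lw (Pi.single i 1) = w i := by simp [lw]
  rw [← hvi, ← hwi, LinearIsometry.extend_apply L₀ ⟨_, LinearMap.mem_range_self _ _⟩]
  exact lw_eq_of_lv_eq (lv_g _)

theorem Matrix.exists_mem_unitaryGroup_mulVec_eq_of_gram_eq {β : Type*} [Fintype β]
    [DecidableEq β] {v w : ι → β → 𝕜} (h : ∀ i j, star (v i) ⬝ᵥ v j = star (w i) ⬝ᵥ w j) :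
    ∃ V ∈ unitaryGroup β 𝕜, ∀ i, V *ᵥ v i = w i := by
  obtain ⟨L, hL⟩ := exists_linearIsometry_apply_eq_of_inner_eq (𝕜 := 𝕜)
    (v := fun i => WithLp.toLp 2 (v i)) (w := fun i => WithLp.toLp 2 (w i))
    (by simpa [EuclideanSpace.inner_toLp_toLp, dotProduct_comm] using h)
  let B := (EuclideanSpace.basisFun β 𝕜).toBasis
  refine ⟨(L.toLinearIsometryEquiv rfl).toMatrix B B,
    (L.toLinearIsometryEquiv rfl).toMatrix_mem_unitaryGroup _ _, fun i => ?_⟩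
  have := LinearMap.toMatrix_mulVec_repr B B (L.toLinearIsometryEquiv rfl).toLinearMap
    (WithLp.toLp 2 (v i))
  rwa [LinearEquiv.coe_coe, LinearIsometryEquiv.coe_toLinearEquiv,
    LinearIsometry.coe_toLinearIsometryEquiv, hL] at this

end GramUnitary

def sysSlice {α β ι : Type*} (x : (α × β) × ι → ℂ) (s : α) : β × ι → ℂ :=
  fun p => x ((s, p.1), p.2)

def reducedState {α β : Type*} [Fintype β] (ψ : α × β → ℂ) : Matrix α α ℂ :=
  fun s t => ∑ a, ψ (s, a) * conj (ψ (t, a))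

theorem ampSys_mulVec_vtens_apply {d k : ℕ} (U : Matrix (Fin d × Fin k) (Fin d × Fin k) ℂ)
    (ψ : Fin d × Fin d → ℂ) (χ : Fin k → ℂ) (s a : Fin d) (u : Fin k) :
    (ampSys U *ᵥ vtens ψ χ) ((s, a), u) = (U *ᵥ vtens (fun s' => ψ (s', a)) χ) (s, u) := by
  simp [mulVec, dotProduct, ampSys, vtens, Fintype.sum_prod_type]

theorem star_sysSlice_dotProduct_ampSys_mulVec_vtens {d k : ℕ}
    (U : Matrix (Fin d × Fin k) (Fin d × Fin k) ℂ) (ψ : Fin d × Fin d → ℂ) (χ : Fin k → ℂ)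
    (s t : Fin d) :
    star (sysSlice (ampSys U *ᵥ vtens ψ χ) s) ⬝ᵥ sysSlice (ampSys U *ᵥ vtens ψ χ) t =
      tmap U χ (reducedState ψ) t s := by
  simp only [sysSlice, dotProduct, Fintype.sum_prod_type, Pi.star_apply, ampSys_mulVec_vtens_apply]
  simp only [tmap, ptraceNoise, mul_apply, conjTranspose_apply, kroneckerMap_apply, outer,
    reducedState, mulVec, dotProduct, vtens, Finset.sum_mul, Finset.mul_sum, star_sum, star_mul']
  rw [Finset.sum_comm]
  refine Finset.sum_congr rfl fun u _ => ?_
  rw [Finset.sum_comm_cycle]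
  refine Finset.sum_congr rfl fun q _ => ?_
  rw [Finset.sum_comm]
  refine Finset.sum_congr rfl fun r _ => Finset.sum_congr rfl fun a _ => ?_
  rw [starRingEnd_apply, starRingEnd_apply]
  ring

theorem star_sysSlice_dotProduct_vtens {α β ι : Type*} [Fintype β] [Fintype ι]
    (ψ : α × β → ℂ) (χ : ι → ℂ) (s t : α) :
    star (sysSlice (vtens ψ χ) s) ⬝ᵥ sysSlice (vtens ψ χ) t = nsq χ * reducedState ψ t s := by
  simp only [sysSlice, vtens, dotProduct, Pi.star_apply, nsq, reducedState, Fintype.sum_prod_type,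
    Complex.ofReal_sum, Complex.normSq_eq_conj_mul_self, Finset.mul_sum, Finset.sum_mul]
  refine Finset.sum_congr rfl fun a _ => Finset.sum_congr rfl fun u _ => ?_
  rw [star_mul', ← starRingEnd_apply, ← starRingEnd_apply]
  ring

theorem reducedState_purification {ι α : Type*} [Fintype ι] [DecidableEq ι] [Fintype α]
    {lam : ι → ℝ} (hlam : ∀ i, 0 ≤ lam i) {f : ι → α → ℂ}
    (hf : ∀ i i', inn (f i) (f i') = if i = i' then 1 else 0) :
    reducedState (fun p : α × α => ∑ i, (Real.sqrt (lam i) : ℂ) * f i p.1 * f i p.2) =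
      fun s t => ∑ i, (lam i : ℂ) * f i s * conj (f i t) := by
  ext s t
  have hsq (i : ι) : (Real.sqrt (lam i) : ℂ) * Real.sqrt (lam i) = lam i := by
    rw [← Complex.ofReal_mul, Real.mul_self_sqrt (hlam i)]
  have hinn (i j : ι) : ∑ a, f i a * conj (f j a) = if j = i then 1 else 0 := by
    rw [← hf, inn]
    exact Finset.sum_congr rfl fun a _ => mul_comm _ _
  calc ∑ a, (∑ i, (Real.sqrt (lam i) : ℂ) * f i s * f i a) *
        conj (∑ j, (Real.sqrt (lam j) : ℂ) * f j t * f j a)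
      = ∑ i, ∑ j, (Real.sqrt (lam i) : ℂ) * Real.sqrt (lam j) * f i s * conj (f j t) *
          ∑ a, f i a * conj (f j a) := by
        simp only [map_sum, map_mul, Complex.conj_ofReal, Finset.sum_mul_sum]
        simp only [Finset.mul_sum]
        rw [Finset.sum_comm]
        refine Finset.sum_congr rfl fun i _ => ?_
        rw [Finset.sum_comm]
        exact Finset.sum_congr rfl fun j _ => Finset.sum_congr rfl fun a _ => by ring
    _ = ∑ i, (lam i : ℂ) * f i s * conj (f i t) := by
        simp only [hinn, mul_ite, mul_one, mul_zero, Finset.sum_ite_eq', Finset.mem_univ, if_true,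
          hsq]

theorem sysSlice_ampAbs_mulVec {d k : ℕ} (V : Matrix (Fin d × Fin k) (Fin d × Fin k) ℂ)
    (x : (Fin d × Fin d) × Fin k → ℂ) (s : Fin d) :
    sysSlice (ampAbs V *ᵥ x) s = V *ᵥ sysSlice x s := by
  ext ⟨a, u⟩
  simp [sysSlice, mulVec, dotProduct, ampAbs, Fintype.sum_prod_type]

theorem Matrix.list_prod_mulVec_eq_self {β R : Type*} [Fintype β] [DecidableEq β]
    [CommSemiring R] {L : List (Matrix β β R)} {v : β → R} (h : ∀ A ∈ L, A *ᵥ v = v) :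
    L.prod *ᵥ v = v :=
  List.prod_induction (fun A => A *ᵥ v = v)
    (fun A B hA hB => by rw [← mulVec_mulVec, hB, hA]) (one_mulVec v) h

theorem vpow_update {ι : Type*} {n : ℕ} (χ : ι → ℂ) (g : Fin n → ι) (j : Fin n) (y : ι) :
    vpow n χ (Function.update g j y) = χ y * ∏ l ∈ Finset.univ \ {j}, χ (g l) := by
  simp only [vpow, Function.apply_update (fun _ => χ),
    Finset.prod_update_of_mem (Finset.mem_univ j)]

theorem sum_ite_agree_off_eq_sum_update {ι M : Type*} [Fintype ι] [DecidableEq ι]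
    [AddCommMonoid M] {n : ℕ} (g : Fin n → ι) (j : Fin n) (F : (Fin n → ι) → M) :
    ∑ h : Fin n → ι, (if ∀ l, l ≠ j → g l = h l then F h else 0) =
      ∑ y, F (Function.update g j y) := by
  rw [← Finset.sum_filter, ← Finset.sum_image fun y _ y' _ => (Function.update_injective g j ·)]
  congr 1
  ext h
  simp [Function.update_eq_iff]

theorem amp_mulVec_vtens_vpow {α ι : Type*} [Fintype α] [Fintype ι] [DecidableEq ι] {n : ℕ}
    {W : Matrix (α × ι) (α × ι) ℂ} {ψ : α → ℂ} {χ : ι → ℂ}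
    (hW : W *ᵥ vtens ψ χ = vtens ψ χ) (j : Fin n) :
    amp n W j *ᵥ vtens ψ (vpow n χ) = vtens ψ (vpow n χ) := by
  ext ⟨a, g⟩
  have hWa := congrFun hW (a, g j)
  simp only [mulVec, dotProduct, vtens, Fintype.sum_prod_type] at hWa
  calc (amp n W j *ᵥ vtens ψ (vpow n χ)) (a, g)
      = ∑ b, ∑ y, W (a, g j) (b, y) * (ψ b * vpow n χ (Function.update g j y)) := by
        simp only [mulVec, dotProduct, vtens, Fintype.sum_prod_type, amp, ite_mul, zero_mul]
        refine Finset.sum_congr rfl fun b _ => ?_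
        rw [sum_ite_agree_off_eq_sum_update g j]
        simp only [Function.update_self]
    _ = (∑ b, ∑ y, W (a, g j) (b, y) * (ψ b * χ y)) * ∏ l ∈ Finset.univ \ {j}, χ (g l) := by
        simp only [vpow_update, Finset.sum_mul]
        exact Finset.sum_congr rfl fun b _ => Finset.sum_congr rfl fun y _ => by ring
    _ = vtens ψ (vpow n χ) (a, g) := by
        rw [hWa, vtens, mul_assoc, ← vpow_update, Function.update_eq_self]

theorem steps_mulVec_vtens_vpow {α ι : Type*} [Fintype α] [Fintype ι] [DecidableEq α]
    [DecidableEq ι] {W : Matrix (α × ι) (α × ι) ℂ} {ψ : α → ℂ} {χ : ι → ℂ}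
    (hW : W *ᵥ vtens ψ χ = vtens ψ χ) (n : ℕ) :
    steps n W *ᵥ vtens ψ (vpow n χ) = vtens ψ (vpow n χ) := by
  refine Matrix.list_prod_mulVec_eq_self fun A hA => ?_
  obtain ⟨j, rfl⟩ := List.mem_ofFn.mp (List.mem_reverse.mp hA)
  exact amp_mulVec_vtens_vpow hW j

theorem absorber_exists_general
    (d k : ℕ)
    (U : Matrix (Fin d × Fin k) (Fin d × Fin k) ℂ)
    (χ : Fin k → ℂ) (hχ : nsq χ = 1)
    (lam : Fin d → ℝ) (f : Fin d → Fin d → ℂ)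
    (hf : ∀ i i', inn (f i) (f i') = if i = i' then 1 else 0)
    (hlam_pos : ∀ i, 0 < lam i)
    (ρss : Matrix (Fin d) (Fin d) ℂ)
    (hρss : ρss = fun s t => ∑ i, (lam i : ℂ) * f i s * conj (f i t))
    (hstat : tmap U χ ρss = ρss)
    (ψt : Fin d × Fin d → ℂ)
    (hψt : ψt = fun p => ∑ i, (Real.sqrt (lam i) : ℂ) * f i p.1 * f i p.2) :
    ∃ V ∈ Matrix.unitaryGroup (Fin d × Fin k) ℂ,
      (ampAbs V * ampSys U).mulVec (vtens ψt χ) = vtens ψt χ ∧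
      ∀ n : ℕ,
        (steps n (ampAbs V * ampSys U)).mulVec (vtens ψt (vpow n χ))
          = vtens ψt (vpow n χ) := by
  have hρψ : reducedState ψt = ρss := by
    rw [hψt, hρss]
    exact reducedState_purification (fun i => (hlam_pos i).le) hf
  obtain ⟨V, hV, hVslice⟩ := Matrix.exists_mem_unitaryGroup_mulVec_eq_of_gram_eq
    (v := sysSlice (ampSys U *ᵥ vtens ψt χ)) (w := sysSlice (vtens ψt χ)) fun s t => by
      rw [star_sysSlice_dotProduct_ampSys_mulVec_vtens, star_sysSlice_dotProduct_vtens, hχ, hρψ,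
        hstat, Complex.ofReal_one, one_mul]
  have hfix : (ampAbs V * ampSys U) *ᵥ vtens ψt χ = vtens ψt χ := by
    rw [← mulVec_mulVec]
    ext ⟨⟨s, a⟩, u⟩
    exact congrFun ((sysSlice_ampAbs_mulVec V _ s).trans (hVslice s)) (a, u)
  exact ⟨V, hV, hfix, steps_mulVec_vtens_vpow hfix⟩

/-- coherent quantum absorber, discrete time.
If the transition operator of a discrete quantum Markov chain with unitary `U` and input
state `χ` has a full-rank stationary state `ρ_ss = ∑ i, λ i |f i⟩⟨f i|`, then there is a
unitary `V` on absorber ⊗ noise such that `W = (1⊗V)(U⊗1)` fixes `ψ̃ ⊗ χ`, where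
`ψ̃ = ∑ i, √(λ i) |f i⟩ ⊗ |f i⟩`; consequently for every `n` the `n`-step dynamics leaves
`ψ̃ ⊗ χ^⊗n` invariant, so the output state equals the input state `χ^⊗n`. -/
theorem absorber_exists
    (d k : ℕ)
    (U : Matrix (Fin d × Fin k) (Fin d × Fin k) ℂ)
    (hU : U ∈ Matrix.unitaryGroup (Fin d × Fin k) ℂ)
    (χ : Fin k → ℂ) (hχ : nsq χ = 1)
    (lam : Fin d → ℝ) (f : Fin d → Fin d → ℂ)
    (hf : ∀ i i', inn (f i) (f i') = if i = i' then 1 else 0)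
    (hlam_pos : ∀ i, 0 < lam i)
    (hlam_sum : ∑ i, lam i = 1)
    (ρss : Matrix (Fin d) (Fin d) ℂ)
    (hρss : ρss = fun s t => ∑ i, (lam i : ℂ) * f i s * conj (f i t))
    (hstat : tmap U χ ρss = ρss)
    (ψt : Fin d × Fin d → ℂ)
    (hψt : ψt = fun p => ∑ i, (Real.sqrt (lam i) : ℂ) * f i p.1 * f i p.2) :
    ∃ V ∈ Matrix.unitaryGroup (Fin d × Fin k) ℂ,
      (ampAbs V * ampSys U).mulVec (vtens ψt χ) = vtens ψt χ ∧
      ∀ n : ℕ,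
        (steps n (ampAbs V * ampSys U)).mulVec (vtens ψt (vpow n χ))
          = vtens ψt (vpow n χ) :=
  absorber_exists_general d k U χ hχ lam f hf hlam_pos ρss hρss hstat ψt hψt
end
end

section
/- Let {W_θ} be a family of unitaries on ℂ^D ⊗ ℂ^k depending differentiably on θ, χ ∈ ℂ^k and ψ ∈ ℂ^D unit vectors with W_{θ0}(ψ⊗χ) = ψ⊗χ. For each j ≤ n let {e^[j]_i}_{i=1}^k be an orthonormal basis of ℂ^k (possibly depending on the previous outcomes) with ⟨e^[j]_i, χ⟩ ≠ 0 for all i, set K^[j]_i(θ) = ⟨e^[j]_i|W_θ|χ⟩, K^[j]_i = K^[j]_i(θ0), K̇^[j]_i = (d/dθ)K^[j]_i(θ)|_{θ0}, and c^[j]_i = ⟨e^[j]_i, χ⟩, so that K^[j]_i ψ = c^[j]_i ψ. Let p_θ(i_1,…,i_n) = ‖K^[n]_{i_n}(θ)···K^[1]_{i_1}(θ)ψ‖². Then the classical Fisher information at θ0 satisfies I(n) := Σ p_{θ0}^{−1}(p'_{θ0})² = Σ_{i_1,…,i_n} p_{θ0}(i_1,…,i_n) f(i_1,…,i_n)²,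 where f(i_1,…,i_n) = 2 Re Σ_{j=1}^n ⟨ψ| K^[n]_{i_n}···K^[j+1]_{i_{j+1}} K̇^[j]_{i_j} |ψ⟩ / (c^[j]_{i_j} c^[j+1]_{i_{j+1}} ··· c^[n]_{i_n}). -/
open scoped BigOperators Matrix Kronecker ComplexConjugate Classical
open Matrix

noncomputable section

/-- Kraus operator `⟨e|W|χ⟩`. -/
def kraus {α ι : Type*} [Fintype ι] (W : Matrix (α × ι) (α × ι) ℂ) (e χ : ι → ℂ) :
    Matrix α α ℂ :=
  fun s t => ∑ u, ∑ v, conj (e u) * W (s, u) (t, v) * χ v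

/-- `A (n-1) ⋯ A 1 A 0`. -/
def kprodFin {α : Type*} [Fintype α] [DecidableEq α] {n : ℕ} (A : Fin n → Matrix α α ℂ) :
    Matrix α α ℂ :=
  ((List.ofFn A).reverse).prod

/-- `A (n-1) ⋯ A j`. -/
def kprodFrom {α : Type*} [Fintype α] [DecidableEq α] {n : ℕ} (A : Fin n → Matrix α α ℂ)
    (j : ℕ) : Matrix α α ℂ :=
  (((List.ofFn A).drop j).reverse).prod

/-! At `θ0` every Kraus operator acts on `ψ` as the scalar `c`, so the product of the Kraus
operators of a trajectory maps `ψ` to `(∏ c) ψ`, and its likelihood is `|∏ c|² ≠ 0`: every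
trajectory is possible. Differentiating the product by the Leibniz rule, the factors to the
right of the differentiated one again act as scalars, so
`p' = 2 Re ⟨(∏ c) ψ, ∑ⱼ (∏_{l<j} c_l) K_n ⋯ K_{j+1} K̇ⱼ ψ⟩ = p f`, and `p⁻¹ p'² = p f²`. -/

section InnerProduct

variable {α : Type*} [Fintype α]

lemma inn_smul_left (a : ℂ) (v w : α → ℂ) : inn (a • v) w = conj a * inn v w := by
  simp [inn, Finset.mul_sum, mul_assoc]

lemma inn_sum_smul_right {ι : Type*} (s : Finset ι) (v : α → ℂ) (a : ι → ℂ) (u : ι → α → ℂ) :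
    inn v (∑ j ∈ s, a j • u j) = ∑ j ∈ s, a j * inn v (u j) := by
  simp only [inn, Finset.sum_apply, Pi.smul_apply, smul_eq_mul, Finset.mul_sum]
  rw [Finset.sum_comm]
  exact Finset.sum_congr rfl fun _ _ => Finset.sum_congr rfl fun _ _ => by ring

lemma nsq_smul (a : ℂ) (v : α → ℂ) : nsq (a • v) = Complex.normSq a * nsq v := by
  simp [nsq, Complex.normSq_mul, Finset.mul_sum]

lemma HasDerivAt.nsq {v : ℝ → α → ℂ} {v' : α → ℂ} {x : ℝ} (hv : HasDerivAt v v' x) :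
    HasDerivAt (fun θ => nsq (v θ)) (2 * (inn (v x) v').re) x := by
  have hs : ∀ s, HasDerivAt (fun θ => ‖v θ s‖ ^ 2) (2 * (conj (v x s) * v' s).re) x := by
    intro s
    simpa [Complex.inner, mul_comm] using (hasDerivAt_pi.1 hv s).norm_sq
  simpa only [_root_.nsq, inn, Complex.normSq_eq_norm_sq, Finset.mul_sum, Complex.re_sum] using
    HasDerivAt.fun_sum fun s (_ : s ∈ Finset.univ) => hs s

end InnerProduct

lemma hasDerivAt_mulVec {α β : Type*} [Fintype β] {A : ℝ → Matrix α β ℂ} {A' : Matrix α β ℂ}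
    {v : ℝ → β → ℂ} {v' : β → ℂ} {x : ℝ} (hA : ∀ s t, HasDerivAt (fun θ => A θ s t) (A' s t) x)
    (hv : HasDerivAt v v' x) :
    HasDerivAt (fun θ => A θ *ᵥ v θ) (A' *ᵥ v x + A x *ᵥ v') x := by
  refine hasDerivAt_pi.2 fun s => ?_
  have := HasDerivAt.fun_sum fun t (_ : t ∈ Finset.univ) => (hA s t).mul (hasDerivAt_pi.1 hv t)
  simpa [mulVec, dotProduct, Finset.sum_add_distrib] using this

section KrausProducts

variable {α : Type*} [Fintype α] [DecidableEq α]

lemma kprodFin_succ {m : ℕ} (A : Fin (m + 1) → Matrix α α ℂ) :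
    kprodFin A = A (Fin.last m) * kprodFin (fun j : Fin m => A j.castSucc) := by
  rw [kprodFin, List.ofFn_succ', List.concat_eq_append, List.reverse_append]
  simp [kprodFin]

lemma kprodFrom_castSucc_add_one {m : ℕ} (A : Fin (m + 1) → Matrix α α ℂ) (j : Fin m) :
    kprodFrom A (j + 1) = A (Fin.last m) * kprodFrom (fun l : Fin m => A l.castSucc) (j + 1) := by
  rw [kprodFrom, List.ofFn_succ', List.concat_eq_append,
    List.drop_append_of_le_length (by simp), List.reverse_append]
  simp [kprodFrom]

lemma kprodFrom_length {m : ℕ} (A : Fin m → Matrix α α ℂ) : kprodFrom A m = 1 := by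
  simp [kprodFrom, List.drop_eq_nil_of_le]

lemma kprodFin_mulVec_of_mulVec_eq_smul {m : ℕ} {A : Fin m → Matrix α α ℂ} {c : Fin m → ℂ}
    {ψ : α → ℂ} (hA : ∀ j, A j *ᵥ ψ = c j • ψ) : kprodFin A *ᵥ ψ = (∏ j, c j) • ψ := by
  induction m with
  | zero => simp [kprodFin]
  | succ m ih =>
    rw [kprodFin_succ, ← mulVec_mulVec, ih fun j => hA j.castSucc, mulVec_smul, hA,
      Fin.prod_univ_castSucc, smul_smul, mul_comm]

/-- Leibniz rule: the factors to the right of the differentiated one act on `ψ` as the scalars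
`c l`, `l < j`. -/
lemma hasDerivAt_kprodFin_mulVec {m : ℕ} {A : ℝ → Fin m → Matrix α α ℂ}
    {A' : Fin m → Matrix α α ℂ} {c : Fin m → ℂ} {ψ : α → ℂ} {θ0 : ℝ}
    (hA : ∀ j s t, HasDerivAt (fun θ => A θ j s t) (A' j s t) θ0)
    (hAψ : ∀ j, A θ0 j *ᵥ ψ = c j • ψ) :
    HasDerivAt (fun θ => kprodFin (A θ) *ᵥ ψ)
      (∑ j, (∏ l ∈ Finset.Iio j, c l) • ((kprodFrom (A θ0) (j + 1) * A' j) *ᵥ ψ)) θ0 := by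
  induction m with
  | zero => simpa [kprodFin] using hasDerivAt_const θ0 ψ
  | succ m ih =>
    have hB := ih (A := fun θ j => A θ j.castSucc) (fun j => hA j.castSucc)
      (fun j => hAψ j.castSucc)
    have hfactor : (fun θ => kprodFin (A θ) *ᵥ ψ)
        = fun θ => A θ (Fin.last m) *ᵥ (kprodFin (fun j : Fin m => A θ j.castSucc) *ᵥ ψ) := by
      simp only [kprodFin_succ, mulVec_mulVec]
    rw [hfactor]
    convert hasDerivAt_mulVec (hA (Fin.last m)) hB using 1
    rw [Fin.sum_univ_castSucc, add_comm, Fin.val_last, kprodFrom_length, one_mul,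
      kprodFin_mulVec_of_mulVec_eq_smul fun j => hAψ j.castSucc, Fin.Iio_last_eq_map,
      Finset.prod_map, mulVec_sum]
    congr 1
    · rw [mulVec_smul]
      rfl
    · refine Finset.sum_congr rfl fun j _ => ?_
      rw [Fin.Iio_castSucc, Finset.prod_map, mulVec_smul, mulVec_mulVec, Fin.val_castSucc,
        kprodFrom_castSucc_add_one, mul_assoc]
      rfl

end KrausProducts

lemma conj_prod_mul_prod_Iio {m : ℕ} (c : Fin m → ℂ) (j : Fin m) (hc : ∀ l, c l ≠ 0) :
    conj (∏ l, c l) * ∏ l ∈ Finset.Iio j, c l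
      = (Complex.normSq (∏ l, c l) : ℂ) / ∏ l ∈ Finset.Ici j, c l := by
  have hIci : ∏ l ∈ Finset.Ici j, c l ≠ 0 := Finset.prod_ne_zero_iff.2 fun l _ => hc l
  have hcompl : (Finset.Iio j)ᶜ = Finset.Ici j := by ext; simp
  rw [Complex.normSq_eq_conj_mul_self, ← Finset.prod_mul_prod_compl (Finset.Iio j), hcompl]
  field_simp

/-- The paper's `f(i₁, …, iₙ)`, the logarithmic derivative of the likelihood of one trajectory. -/
def trajectoryScore {α : Type*} [Fintype α] [DecidableEq α] {m : ℕ}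
    (A A' : Fin m → Matrix α α ℂ) (c : Fin m → ℂ) (ψ : α → ℂ) : ℝ :=
  2 * (∑ j : Fin m, inn ψ ((kprodFrom A (j + 1) * A' j) *ᵥ ψ) / ∏ l ∈ Finset.Ici j, c l).re

lemma hasDerivAt_nsq_kprodFin_mulVec {α : Type*} [Fintype α] [DecidableEq α] {m : ℕ}
    {A : ℝ → Fin m → Matrix α α ℂ} {A' : Fin m → Matrix α α ℂ} {c : Fin m → ℂ} {ψ : α → ℂ}
    {θ0 : ℝ} (hA : ∀ j s t, HasDerivAt (fun θ => A θ j s t) (A' j s t) θ0)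
    (hAψ : ∀ j, A θ0 j *ᵥ ψ = c j • ψ) (hc : ∀ j, c j ≠ 0) :
    HasDerivAt (fun θ => nsq (kprodFin (A θ) *ᵥ ψ))
      (Complex.normSq (∏ j, c j) * trajectoryScore (A θ0) A' c ψ) θ0 := by
  have h := (hasDerivAt_kprodFin_mulVec hA hAψ).nsq
  rw [kprodFin_mulVec_of_mulVec_eq_smul hAψ, inn_smul_left, inn_sum_smul_right,
    Finset.mul_sum] at h
  convert h using 1
  have hterm : ∀ j ∈ Finset.univ, conj (∏ l, c l) *
      ((∏ l ∈ Finset.Iio j, c l) * inn ψ ((kprodFrom (A θ0) (j + 1) * A' j) *ᵥ ψ))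
      = (Complex.normSq (∏ l, c l) : ℂ) *
        (inn ψ ((kprodFrom (A θ0) (j + 1) * A' j) *ᵥ ψ) / ∏ l ∈ Finset.Ici j, c l) := by
    intro j _
    rw [← mul_assoc, conj_prod_mul_prod_Iio c j hc]
    ring
  rw [Finset.sum_congr rfl hterm, ← Finset.mul_sum, Complex.re_ofReal_mul, trajectoryScore]
  ring

lemma sum_inv_mul_sq_eq_sum_mul_sq {ι : Type*} [Fintype ι] {p pd f : ι → ℝ}
    (hp : ∀ i, p i ≠ 0) (hpd : ∀ i, pd i = p i * f i) :
    ∑ i ∈ Finset.univ.filter (fun i => p i ≠ 0), (p i)⁻¹ * pd i ^ 2 = ∑ i, p i * f i ^ 2 := by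
  rw [Finset.filter_true_of_mem fun i _ => hp i]
  refine Finset.sum_congr rfl fun i _ => ?_
  rw [hpd]
  field_simp [hp i]

theorem output_CFI_sampling_formula_general
    (D k n : ℕ) (θ0 : ℝ)
    (W : ℝ → Matrix (Fin D × Fin k) (Fin D × Fin k) ℂ)
    (ψ : Fin D → ℂ) (χ : Fin k → ℂ) (hψ : nsq ψ = 1)
    -- adaptive measurement bases (the basis at step j depends only on earlier outcomes)
    (e : Fin n → (Fin n → Fin k) → Fin k → Fin k → ℂ)
    (hchi0 : ∀ (j : Fin n) (g : Fin n → Fin k) (i : Fin k), inn (e j g i) χ ≠ 0)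
    -- the eigenvalues c and the eigenvector relation K ψ = c ψ at θ0
    (c : (Fin n → Fin k) → Fin n → ℂ)
    (hc : ∀ g (j : Fin n), c g j = inn (e j g (g j)) χ)
    (hKψ : ∀ g (j : Fin n),
      (kraus (W θ0) (e j g (g j)) χ).mulVec ψ = c g j • ψ)
    -- the derivatives of the Kraus operators at θ0
    (Kd : (Fin n → Fin k) → Fin n → Matrix (Fin D) (Fin D) ℂ)
    (hKd : ∀ g (j : Fin n) s t,
      HasDerivAt (fun θ => kraus (W θ) (e j g (g j)) χ s t) (Kd g j s t) θ0)
    -- the output likelihood and its derivative at θ0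
    (p : ℝ → (Fin n → Fin k) → ℝ)
    (hp : ∀ θ g, p θ g =
      nsq ((kprodFin fun j : Fin n => kraus (W θ) (e j g (g j)) χ).mulVec ψ))
    (pd : (Fin n → Fin k) → ℝ)
    (hpd : ∀ g, HasDerivAt (fun θ => p θ g) (pd g) θ0) :
    (∑ g ∈ Finset.univ.filter (fun g : Fin n → Fin k => p θ0 g ≠ 0),
        (p θ0 g)⁻¹ * (pd g) ^ 2)
      = ∑ g : Fin n → Fin k, p θ0 g *
          (2 * (∑ j : Fin n,
            inn ψ (((kprodFrom (fun l : Fin n => kraus (W θ0) (e l g (g l)) χ) ((j : ℕ) + 1)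
                      * Kd g j).mulVec ψ))
              / ∏ l ∈ Finset.Ici j, c g l).re) ^ 2 := by
  have hc0 : ∀ g j, c g j ≠ 0 := fun g j => hc g j ▸ hchi0 j g (g j)
  have hp0 : ∀ g, p θ0 g = Complex.normSq (∏ j, c g j) := fun g => by
    rw [hp, kprodFin_mulVec_of_mulVec_eq_smul (hKψ g), nsq_smul, hψ, mul_one]
  have hderiv : ∀ g, HasDerivAt (fun θ => p θ g)
      (p θ0 g * trajectoryScore (fun j => kraus (W θ0) (e j g (g j)) χ) (Kd g) (c g) ψ) θ0 :=
    fun g => by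
      rw [hp0, funext fun θ => hp θ g]
      exact hasDerivAt_nsq_kprodFin_mulVec (hKd g) (hKψ g) (hc0 g)
  refine sum_inv_mul_sq_eq_sum_mul_sq (fun g => ?_) fun g => (hpd g).unique (hderiv g)
  rw [hp0, Ne, Complex.normSq_eq_zero]
  exact Finset.prod_ne_zero_iff.2 fun j _ => hc0 g j

/-- Lemma: the output classical Fisher information as an expectation over
trajectories. With the noise units measured sequentially in (adaptive) bases `e`,
stationarity `W(ψ⊗χ) = ψ⊗χ` at `θ0` and `⟨e,χ⟩ ≠ 0`, the classical Fisher information of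
the output record equals `∑ 𝐢 p(𝐢) f(𝐢)²` where
`f(𝐢) = 2 Re ∑ⱼ ⟨ψ|K_{iₙ}⋯K_{i_{j+1}} K̇_{i_j}|ψ⟩ / (c_{i_j}⋯c_{iₙ})`. -/
theorem output_CFI_sampling_formula
    (D k n : ℕ) (θ0 : ℝ)
    (W : ℝ → Matrix (Fin D × Fin k) (Fin D × Fin k) ℂ)
    (hWu : ∀ θ, W θ ∈ Matrix.unitaryGroup (Fin D × Fin k) ℂ)
    (Wd : Matrix (Fin D × Fin k) (Fin D × Fin k) ℂ)
    (hWd : ∀ x y, HasDerivAt (fun θ => W θ x y) (Wd x y) θ0)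
    (ψ : Fin D → ℂ) (χ : Fin k → ℂ) (hψ : nsq ψ = 1) (hχ : nsq χ = 1)
    (hstat : (W θ0).mulVec (vtens ψ χ) = vtens ψ χ)
    -- adaptive measurement bases (the basis at step j depends only on earlier outcomes)
    (e : Fin n → (Fin n → Fin k) → Fin k → Fin k → ℂ)
    (hadapt : ∀ (j : Fin n) (g g' : Fin n → Fin k),
      (∀ l : Fin n, l < j → g l = g' l) → e j g = e j g')
    (honb : ∀ (j : Fin n) (g : Fin n → Fin k) (i i' : Fin k),
      inn (e j g i) (e j g i') = if i = i' then 1 else 0)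
    (hchi0 : ∀ (j : Fin n) (g : Fin n → Fin k) (i : Fin k), inn (e j g i) χ ≠ 0)
    -- the eigenvalues c and the eigenvector relation K ψ = c ψ at θ0
    (c : (Fin n → Fin k) → Fin n → ℂ)
    (hc : ∀ g (j : Fin n), c g j = inn (e j g (g j)) χ)
    (hKψ : ∀ g (j : Fin n),
      (kraus (W θ0) (e j g (g j)) χ).mulVec ψ = c g j • ψ)
    -- the derivatives of the Kraus operators at θ0
    (Kd : (Fin n → Fin k) → Fin n → Matrix (Fin D) (Fin D) ℂ)
    (hKd : ∀ g (j : Fin n) s t,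
      HasDerivAt (fun θ => kraus (W θ) (e j g (g j)) χ s t) (Kd g j s t) θ0)
    -- the output likelihood and its derivative at θ0
    (p : ℝ → (Fin n → Fin k) → ℝ)
    (hp : ∀ θ g, p θ g =
      nsq ((kprodFin fun j : Fin n => kraus (W θ) (e j g (g j)) χ).mulVec ψ))
    (pd : (Fin n → Fin k) → ℝ)
    (hpd : ∀ g, HasDerivAt (fun θ => p θ g) (pd g) θ0) :
    (∑ g ∈ Finset.univ.filter (fun g : Fin n → Fin k => p θ0 g ≠ 0),
        (p θ0 g)⁻¹ * (pd g) ^ 2)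
      = ∑ g : Fin n → Fin k, p θ0 g *
          (2 * (∑ j : Fin n,
            inn ψ (((kprodFrom (fun l : Fin n => kraus (W θ0) (e l g (g l)) χ) ((j : ℕ) + 1)
                      * Kd g j).mulVec ψ))
              / ∏ l ∈ Finset.Ici j, c g l).re) ^ 2 :=
  output_CFI_sampling_formula_general D k n θ0 W ψ χ hψ e hchi0 c hc hKψ Kd hKd p hp pd hpd
end
end

section
/- For the qubit amplitude-decay model with parameters λ ∈ (0,1), a = √(1−λ), b = √λ, the system-output quantum Fisher information at θ0 = 0, namely F(n) = 4 Σ_{(i_1,…,i_n) ∈ {0,1}^n} ‖ Σ_{j=1}^n K_{i_n}···K_{i_{j+1}} K̇_{i_j} K_{i_{j−1}}···K_{i_1} |0⟩ ‖², differs from 8n/(1−a) by a quantity bounded uniformly in n: there exists a constant C (depending only on λ) such that |F(n) − 8n/(1−a)| ≤ C for all n ≥ 1. -/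
open scoped BigOperators Matrix ComplexConjugate Classical
open Matrix

noncomputable section

/-- `A (j-1) ⋯ A 0`. -/
def kprodTo {α : Type*} [Fintype α] [DecidableEq α] {n : ℕ} (A : Fin n → Matrix α α ℂ)
    (j : ℕ) : Matrix α α ℂ :=
  (((List.ofFn A).take j).reverse).prod

/-- Kraus operators of the qubit amplitude-decay model at `θ0 = 0`:
`K 0 = |0⟩⟨0| + a|1⟩⟨1|`, `K 1 = b e^{iφ}|0⟩⟨1|`. -/
def Kop (a b φ : ℝ) : Fin 2 → Matrix (Fin 2) (Fin 2) ℂ := fun i =>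
  if i = 0 then !![1, 0; 0, (a : ℂ)]
  else !![0, (b : ℂ) * Complex.exp (Complex.I * φ); 0, 0]

/-- Their `θ`-derivatives at `θ0 = 0`: `K̇ 0 = i|1⟩⟨0| + i a|0⟩⟨1|`, `K̇ 1 = |1⟩⟨0|`. -/
def Kdop (a : ℝ) : Fin 2 → Matrix (Fin 2) (Fin 2) ℂ := fun i =>
  if i = 0 then !![0, Complex.I * (a : ℂ); Complex.I, 0]
  else !![0, 0; 1, 0]

/-- The initial (stationary) system state `|0⟩`. -/
def e0 : Fin 2 → ℂ := fun i => if i = 0 then 1 else 0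

/-- The system-output quantum Fisher information at `θ0 = 0`:
`F(n) = 4 ∑_𝐢 ‖∑ⱼ K_{iₙ}⋯K̇_{i_j}⋯K_{i_1}|0⟩‖²`. -/
def Fqfi (a b φ : ℝ) (n : ℕ) : ℝ :=
  4 * ∑ g : Fin n → Fin 2,
    nsq (∑ j : Fin n,
      (kprodFrom (fun l : Fin n => Kop a b φ (g l)) ((j : ℕ) + 1)
        * Kdop a (g j)
        * kprodTo (fun l : Fin n => Kop a b φ (g l)) (j : ℕ)).mulVec e0)

/-!
Write `V_n(g) = ∑ⱼ K_{g_n} ⋯ K̇_{g_j} ⋯ K_{g_1}|0⟩` for a trajectory `g`, so that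
`F(n) = 4 ∑_g ‖V_n(g)‖²`. Appending an outcome `i` gives `V_{n+1}(g,i) = K_i V_n(g) + K̇_i K_g|0⟩`,
and by stationarity `K_g|0⟩` vanishes unless `g ≡ 0`. The completeness relation `∑ K_i†K_i = 1`
then shows that `∑_g ‖V_n(g)‖²` changes only through the all-zero trajectory, along which
`V_n(0) = i(1 + a + ⋯ + a^{n-1})|1⟩`. Hence `F(n+1) = F(n) + 8 + 8a(1 - aⁿ)/(1 - a)`, and so
`F(n) = 8n/(1 - a) - 8a(1 - aⁿ)/(1 - a)²`.
-/

theorem nsq_eq_star_dotProduct {α : Type*} [Fintype α] (v : α → ℂ) :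
    (nsq v : ℂ) = star v ⬝ᵥ v := by
  simp [nsq, dotProduct, Complex.normSq_eq_conj_mul_self]

theorem sum_pi_fin_succ_eq_sum_sum_snoc {β M : Type*} [Fintype β] [AddCommMonoid M] {n : ℕ}
    (f : (Fin (n + 1) → β) → M) : ∑ g, f g = ∑ g : Fin n → β, ∑ i, f (Fin.snoc g i) := by
  rw [← (Fin.snocEquiv fun _ => β).sum_comp, Fintype.sum_prod_type, Finset.sum_comm]
  rfl

theorem Fin.snoc_const {β : Type*} {n : ℕ} (x : β) :
    Fin.snoc (fun _ : Fin n => x) x = fun _ => x :=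
  Fin.snoc_init_self fun _ => x

section KrausPath

variable {α ι : Type*} [Fintype α] [DecidableEq α]

theorem kprodFrom_snoc {n : ℕ} (A : Fin n → Matrix α α ℂ) (X : Matrix α α ℂ) {j : ℕ}
    (hj : j ≤ n) : kprodFrom (Fin.snoc A X : Fin (n + 1) → _) j = X * kprodFrom A j := by
  rw [kprodFrom, kprodFrom, List.ofFn_succ', List.concat_eq_append,
    List.drop_append_of_le_length (by simpa using hj), List.reverse_append]
  simp

theorem kprodFrom_snoc_last {n : ℕ} (A : Fin n → Matrix α α ℂ) (X : Matrix α α ℂ) :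
    kprodFrom (Fin.snoc A X : Fin (n + 1) → _) (n + 1) = 1 := by
  rw [kprodFrom, List.drop_eq_nil_of_le (by simp)]
  simp

theorem kprodTo_snoc {n : ℕ} (A : Fin n → Matrix α α ℂ) (X : Matrix α α ℂ) {j : ℕ}
    (hj : j ≤ n) : kprodTo (Fin.snoc A X : Fin (n + 1) → _) j = kprodTo A j := by
  rw [kprodTo, kprodTo, List.ofFn_succ', List.concat_eq_append,
    List.take_append_of_le_length (by simpa using hj)]
  simp

theorem kprodTo_snoc_last {n : ℕ} (A : Fin n → Matrix α α ℂ) (X : Matrix α α ℂ) :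
    kprodTo (Fin.snoc A X : Fin (n + 1) → _) (n + 1) = X * kprodTo A n := by
  rw [kprodTo, kprodTo, List.ofFn_succ', List.concat_eq_append, List.take_of_length_le (by simp),
    List.reverse_append, List.take_of_length_le (by simp)]
  simp

variable (K Kd : ι → Matrix α α ℂ) (ψ : α → ℂ)

def pathState {n : ℕ} (g : Fin n → ι) : α → ℂ :=
  kprodTo (K ∘ g) n *ᵥ ψ

/-- The `θ`-derivative of `pathState K ψ g` (product rule) when `K` depends on `θ` with
derivative `Kd`. -/
def pathStateDeriv {n : ℕ} (g : Fin n → ι) : α → ℂ :=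
  ∑ j : Fin n,
    (kprodFrom (K ∘ g) (j + 1) * Kd (g j) * kprodTo (K ∘ g) j) *ᵥ ψ

theorem pathState_snoc {n : ℕ} (g : Fin n → ι) (i : ι) :
    pathState K ψ (Fin.snoc g i) = K i *ᵥ pathState K ψ g := by
  rw [pathState, pathState, Fin.comp_snoc, kprodTo_snoc_last, mulVec_mulVec]

theorem pathStateDeriv_snoc {n : ℕ} (g : Fin n → ι) (i : ι) :
    pathStateDeriv K Kd ψ (Fin.snoc g i)
      = K i *ᵥ pathStateDeriv K Kd ψ g + Kd i *ᵥ pathState K ψ g := by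
  rw [pathStateDeriv, Fin.sum_univ_castSucc, Fin.comp_snoc, pathStateDeriv, mulVec_sum]
  congr 1
  · refine Finset.sum_congr rfl fun j _ => ?_
    rw [Fin.val_castSucc, Fin.snoc_castSucc, kprodFrom_snoc _ _ j.isLt,
      kprodTo_snoc _ _ j.isLt.le, mulVec_mulVec, Matrix.mul_assoc, Matrix.mul_assoc,
      Matrix.mul_assoc]
  · rw [Fin.val_last, Fin.snoc_last, kprodFrom_snoc_last, kprodTo_snoc _ _ le_rfl, Matrix.one_mul,
      pathState, mulVec_mulVec]

theorem pathState_of_stationary [DecidableEq ι] {i₀ : ι} (hfix : K i₀ *ᵥ ψ = ψ)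
    (hkill : ∀ i ≠ i₀, K i *ᵥ ψ = 0) {n : ℕ} (g : Fin n → ι) :
    pathState K ψ g = if g = fun _ => i₀ then ψ else 0 := by
  induction n with
  | zero => simp [pathState, kprodTo, Subsingleton.elim g (fun _ => i₀)]
  | succ n ih =>
    obtain ⟨g, i, rfl⟩ : ∃ g' i, g = Fin.snoc g' i :=
      ⟨Fin.init g, g (Fin.last n), (Fin.snoc_init_self g).symm⟩
    rw [pathState_snoc, ih, ← Fin.snoc_const (n := n) i₀]
    simp only [Fin.snoc_inj]
    by_cases hg : g = fun _ => i₀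
    · by_cases hi : i = i₀
      · simp [hg, hi, hfix]
      · simp [hg, hi, hkill i hi]
    · simp [hg]

theorem sum_nsq_mulVec_of_sum_conjTranspose_mul_eq_one [Fintype ι]
    (hK : ∑ i, (K i)ᴴ * K i = 1) (v : α → ℂ) : ∑ i, nsq (K i *ᵥ v) = nsq v := by
  apply Complex.ofReal_injective
  simp only [Complex.ofReal_sum, nsq_eq_star_dotProduct, star_mulVec, ← dotProduct_mulVec,
    mulVec_mulVec, ← dotProduct_sum, ← sum_mulVec, hK, one_mulVec]

theorem sum_nsq_pathStateDeriv_succ [Fintype ι] [DecidableEq ι] (hK : ∑ i, (K i)ᴴ * K i = 1)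
    {i₀ : ι} (hfix : K i₀ *ᵥ ψ = ψ) (hkill : ∀ i ≠ i₀, K i *ᵥ ψ = 0) (n : ℕ) :
    ∑ g : Fin (n + 1) → ι, nsq (pathStateDeriv K Kd ψ g)
      = ∑ g : Fin n → ι, nsq (pathStateDeriv K Kd ψ g)
        + (∑ i, nsq (K i *ᵥ pathStateDeriv K Kd ψ (fun _ : Fin n => i₀) + Kd i *ᵥ ψ)
          - nsq (pathStateDeriv K Kd ψ (fun _ : Fin n => i₀))) := by
  set v₀ := pathStateDeriv K Kd ψ (fun _ : Fin n => i₀)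
  have step (g : Fin n → ι) : ∑ i, nsq (pathStateDeriv K Kd ψ (Fin.snoc g i))
      = nsq (pathStateDeriv K Kd ψ g)
        + if g = (fun _ => i₀) then ∑ i, nsq (K i *ᵥ v₀ + Kd i *ᵥ ψ) - nsq v₀ else 0 := by
    simp only [pathStateDeriv_snoc, pathState_of_stationary K ψ hfix hkill]
    split_ifs with hg
    · subst hg; ring
    · simp [sum_nsq_mulVec_of_sum_conjTranspose_mul_eq_one K hK]
  rw [sum_pi_fin_succ_eq_sum_sum_snoc, Finset.sum_congr rfl fun g _ => step g,
    Finset.sum_add_distrib, Finset.sum_ite_eq']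
  simp

end KrausPath

section AmplitudeDecay

open Finset

variable (a b φ : ℝ)

theorem e0_eq : e0 = ![1, 0] := by
  ext k; fin_cases k <;> simp [e0]

theorem sum_conjTranspose_Kop_mul_Kop (hab : a ^ 2 + b ^ 2 = 1) :
    ∑ i, (Kop a b φ i)ᴴ * Kop a b φ i = 1 := by
  have hexp : starRingEnd ℂ (Complex.exp (Complex.I * φ)) * Complex.exp (Complex.I * φ) = 1 := by
    rw [← Complex.exp_conj, ← Complex.exp_add]
    simp
  ext i j
  fin_cases i <;> fin_cases j <;> simp [Kop, Fin.sum_univ_two, Matrix.mul_apply]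
  have habC : (a : ℂ) ^ 2 + (b : ℂ) ^ 2 = 1 := by exact_mod_cast hab
  linear_combination (b : ℂ) ^ 2 * hexp + habC

theorem Kop_zero_mulVec_e0 : Kop a b φ 0 *ᵥ e0 = e0 := by
  ext k; fin_cases k <;> simp [Kop, e0_eq]

theorem Kop_mulVec_e0_of_ne_zero {i : Fin 2} (hi : i ≠ 0) : Kop a b φ i *ᵥ e0 = 0 := by
  ext k; fin_cases k <;> simp [Kop, e0_eq, hi]

theorem pathStateDeriv_Kop_const_zero (n : ℕ) :
    pathStateDeriv (Kop a b φ) (Kdop a) e0 (fun _ : Fin n => 0)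
      = ![0, Complex.I * (∑ m ∈ range n, a ^ m : ℝ)] := by
  induction n with
  | zero => ext k; fin_cases k <;> simp [pathStateDeriv]
  | succ n ih =>
    rw [← Fin.snoc_const, pathStateDeriv_snoc, ih, pathState_of_stationary _ _
      (Kop_zero_mulVec_e0 a b φ) (fun _ => Kop_mulVec_e0_of_ne_zero a b φ), if_pos rfl]
    ext k; fin_cases k <;> simp [Kop, Kdop, e0_eq, geom_sum_succ]
    ring

theorem sum_nsq_Kop_mulVec_add_Kdop_mulVec_e0_sub_nsq (hab : a ^ 2 + b ^ 2 = 1) (s : ℝ) :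
    ∑ i, nsq (Kop a b φ i *ᵥ ![0, Complex.I * s] + Kdop a i *ᵥ e0)
      - nsq (![0, Complex.I * s] : Fin 2 → ℂ) = 2 * a * s + 2 := by
  have hexp : Complex.normSq (Complex.exp (Complex.I * φ)) = 1 := by
    rw [mul_comm, Complex.normSq_eq_norm_sq, Complex.norm_exp_ofReal_mul_I, one_pow]
  rw [Complex.normSq_apply] at hexp
  simp [nsq, Fin.sum_univ_two, Kop, Kdop, e0_eq, Complex.normSq_apply]
  linear_combination s ^ 2 * hab + s ^ 2 * b ^ 2 * hexp

theorem Fqfi_eq_sum_nsq_pathStateDeriv (n : ℕ) :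
    Fqfi a b φ n = 4 * ∑ g : Fin n → Fin 2, nsq (pathStateDeriv (Kop a b φ) (Kdop a) e0 g) :=
  rfl

theorem Fqfi_succ (hab : a ^ 2 + b ^ 2 = 1) (n : ℕ) :
    Fqfi a b φ (n + 1) = Fqfi a b φ n + 8 * a * ∑ m ∈ range n, a ^ m + 8 := by
  have h := sum_nsq_pathStateDeriv_succ (Kop a b φ) (Kdop a) e0
    (sum_conjTranspose_Kop_mul_Kop a b φ hab) (Kop_zero_mulVec_e0 a b φ)
    (fun _ => Kop_mulVec_e0_of_ne_zero a b φ) n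
  rw [pathStateDeriv_Kop_const_zero, sum_nsq_Kop_mulVec_add_Kdop_mulVec_e0_sub_nsq a b φ hab] at h
  rw [Fqfi_eq_sum_nsq_pathStateDeriv, Fqfi_eq_sum_nsq_pathStateDeriv, h]
  ring

theorem Fqfi_eq (hab : a ^ 2 + b ^ 2 = 1) (ha : a < 1) (n : ℕ) :
    Fqfi a b φ n = 8 * n / (1 - a) - 8 * a * (1 - a ^ n) / (1 - a) ^ 2 := by
  have h1a : 1 - a ≠ 0 := sub_ne_zero.2 ha.ne'
  have ha1 : a - 1 ≠ 0 := sub_ne_zero.2 ha.ne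
  induction n with
  | zero => simp [Fqfi_eq_sum_nsq_pathStateDeriv, pathStateDeriv, nsq]
  | succ n ih =>
    rw [Fqfi_succ a b φ hab, ih, geom_sum_eq ha.ne]
    push_cast
    field_simp
    ring

end AmplitudeDecay

/-- `F(n)` differs from `8n/(1-a)` by a quantity bounded uniformly in `n`
(and in the known phase `φ`), by a constant depending only on `λ`. -/
theorem qfi_linear_growth_bounded_remainder
    (lam : ℝ) (hlam0 : 0 < lam) (hlam1 : lam < 1)
    (a b : ℝ) (ha : a = Real.sqrt (1 - lam)) (hb : b = Real.sqrt lam) :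
    ∃ C : ℝ, ∀ (φ : ℝ) (n : ℕ), 1 ≤ n →
      |Fqfi a b φ n - 8 * n / (1 - a)| ≤ C := by
  have ha0 : 0 ≤ a := ha ▸ Real.sqrt_nonneg _
  have ha2 : a ^ 2 = 1 - lam := by rw [ha, Real.sq_sqrt (by linarith)]
  have hab : a ^ 2 + b ^ 2 = 1 := by rw [ha2, hb, Real.sq_sqrt hlam0.le]; ring
  have ha1 : a < 1 := by nlinarith
  refine ⟨8 * a / (1 - a) ^ 2, fun φ n _ => ?_⟩
  have hpow : 0 ≤ 1 - a ^ n := sub_nonneg.2 (pow_le_one₀ ha0 ha1.le)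
  calc |Fqfi a b φ n - 8 * n / (1 - a)| = 8 * a * (1 - a ^ n) / (1 - a) ^ 2 := by
        rw [Fqfi_eq a b φ hab ha1, sub_sub_cancel_left, abs_neg,
          abs_of_nonneg (div_nonneg (mul_nonneg (by positivity) hpow) (sq_nonneg _))]
    _ ≤ 8 * a * 1 / (1 - a) ^ 2 := by
        gcongr
        exact sub_le_self _ (pow_nonneg ha0 n)
    _ = 8 * a / (1 - a) ^ 2 := by rw [mul_one]
end
end

section
/- Let ψ_θ be a unit-vector family in a finite-dimensional complex Hilbert space H of dimension D, differentiable in θ, with ⟨ψ_{θ0}, ψ̇_{θ0}⟩ = 0, and set M = |ψ_{θ0}⟩⟨ψ̇_{θ0}| − |ψ̇_{θ0}⟩⟨ψ_{θ0}|. Let {e_i}_{i=1}^D be an orthonormal basis of H satisfying ⟨e_i| M |e_i⟩ = 0 and |⟨e_i, ψ_{θ0}⟩|² = 1/D for all i. Then the rank-one projective measurement in this basis saturates the quantum Cramér–Rao bound at θ0: writing p_θ(i) = |⟨e_i, ψ_θ⟩|², the classical Fisher information Σ_{i=1}^D p_{θ0}(i)^{−1} (p'_{θ0}(i))² equals the quantum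 Fisher information 4‖ψ̇_{θ0}‖². -/
open scoped ComplexInnerProductSpace ComplexConjugate

/-!
Write `cᵢ = ⟪eᵢ, ψ_{θ0}⟫` and `dᵢ = ⟪eᵢ, ψ̇_{θ0}⟫`. Then `pᵢ = |cᵢ|²` and `ṗᵢ = 2 Re(c̄ᵢ dᵢ)`, so the
i-th Fisher term is `4 (Re(c̄ᵢ dᵢ))² / |cᵢ|² ≤ 4 |dᵢ|²` by Cauchy–Schwarz in `ℂ ≅ ℝ²`, and summing the
right-hand sides gives `4 ‖ψ̇_{θ0}‖²` by Parseval. The condition `⟨eᵢ|M|eᵢ⟩ = 0` says that `c̄ᵢ dᵢ` is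
real, which is exactly the equality case, and `|cᵢ|² = 1/D` keeps every outcome possible.
-/

theorem hasDerivAt_sq_norm_inner {𝕜 E : Type*} [RCLike 𝕜] [NormedAddCommGroup E]
    [InnerProductSpace 𝕜 E] [NormedSpace ℝ E] (v : E) {ψ : ℝ → E} {ψd : E} {θ : ℝ}
    (h : HasDerivAt ψ ψd θ) :
    HasDerivAt (fun t ↦ ‖inner 𝕜 v (ψ t)‖ ^ 2)
      (2 * inner ℝ (inner 𝕜 v (ψ θ)) (inner 𝕜 v ψd)) θ := by
  have hcoeff := (hasDerivAt_const θ v).inner 𝕜 h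
  simp only [inner_zero_left, add_zero] at hcoeff
  exact hcoeff.norm_sq

namespace Complex

theorem real_inner_sq_of_mul_conj_eq {z w : ℂ} (h : z * conj w = w * conj z) :
    inner ℝ z w ^ 2 = ‖z‖ ^ 2 * ‖w‖ ^ 2 := by
  have him : (w * conj z).im = 0 := by
    rw [← conj_eq_iff_im, map_mul, conj_conj, mul_comm, h]
  rw [Complex.inner, ← mul_pow, mul_comm ‖z‖, ← norm_conj z, ← norm_mul, Complex.sq_norm,
    normSq_apply, him]
  ring

theorem inv_sq_norm_mul_sq_two_real_inner {z w : ℂ} (hz : z ≠ 0)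
    (h : z * conj w = w * conj z) :
    (‖z‖ ^ 2)⁻¹ * (2 * inner ℝ z w) ^ 2 = 4 * ‖w‖ ^ 2 := by
  rw [mul_pow, real_inner_sq_of_mul_conj_eq h]
  field_simp
  ring

end Complex

theorem projective_measurement_saturates_QCRB_general
    {H : Type*} [NormedAddCommGroup H] [InnerProductSpace ℂ H]
    (D : ℕ)
    (θ0 : ℝ) (ψ : ℝ → H)
    (ψd : H) (hψd : HasDerivAt ψ ψd θ0)
    (e : OrthonormalBasis (Fin D) ℂ H)
    -- ⟨e i| M |e i⟩ = 0 for M = |ψ_{θ0}⟩⟨ψ̇_{θ0}| - |ψ̇_{θ0}⟩⟨ψ_{θ0}|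
    (hM : ∀ i, ⟪e i, ψ θ0⟫ * ⟪ψd, e i⟫ - ⟪e i, ψd⟫ * ⟪ψ θ0, e i⟫ = 0)
    (hunif : ∀ i, ‖⟪e i, ψ θ0⟫‖ ^ 2 = 1 / D)
    (p : ℝ → Fin D → ℝ) (hp : ∀ θ i, p θ i = ‖⟪e i, ψ θ⟫‖ ^ 2)
    (pd : Fin D → ℝ) (hpd : ∀ i, HasDerivAt (fun θ => p θ i) (pd i) θ0) :
    ∑ i : Fin D, (p θ0 i)⁻¹ * (pd i) ^ 2 = 4 * ‖ψd‖ ^ 2 := by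
  have hterm : ∀ i, (p θ0 i)⁻¹ * (pd i) ^ 2 = 4 * ‖⟪e i, ψd⟫‖ ^ 2 := by
    intro i
    have hpd_eq : pd i = 2 * inner ℝ ⟪e i, ψ θ0⟫ ⟪e i, ψd⟫ :=
      (hpd i).unique <| by simpa only [hp] using hasDerivAt_sq_norm_inner (e i) hψd
    have hcoeff_ne : ⟪e i, ψ θ0⟫ ≠ 0 := by
      have hD : (D : ℝ) ≠ 0 := Nat.cast_ne_zero.mpr (Fin.pos i).ne'
      rw [← norm_ne_zero_iff, ← pow_ne_zero_iff two_ne_zero, hunif i]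
      exact one_div_ne_zero hD
    have hreal : ⟪e i, ψ θ0⟫ * conj ⟪e i, ψd⟫ = ⟪e i, ψd⟫ * conj ⟪e i, ψ θ0⟫ := by
      simpa only [inner_conj_symm, sub_eq_zero] using hM i
    rw [hp, hpd_eq, Complex.inv_sq_norm_mul_sq_two_real_inner hcoeff_ne hreal]
  rw [Finset.sum_congr rfl fun i _ ↦ hterm i, ← Finset.mul_sum, e.sum_sq_norm_inner_right]

/-- Zhou–Zou–Jiang saturation condition. For a differentiable pure state
model `ψ_θ` with `⟪ψ_{θ0}, ψ̇_{θ0}⟫ = 0`, any orthonormal basis `{e i}` satisfying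
`⟨e i|M|e i⟩ = 0` (with `M = |ψ⟩⟨ψ̇| - |ψ̇⟩⟨ψ|`) and `|⟨e i, ψ_{θ0}⟩|² = 1/D` yields a
projective measurement whose classical Fisher information equals the quantum Fisher
information `4‖ψ̇_{θ0}‖²`. -/
theorem projective_measurement_saturates_QCRB
    {H : Type*} [NormedAddCommGroup H] [InnerProductSpace ℂ H] [FiniteDimensional ℂ H]
    (D : ℕ) (hD : Module.finrank ℂ H = D)
    (θ0 : ℝ) (ψ : ℝ → H) (hψ : ∀ θ, ‖ψ θ‖ = 1)
    (ψd : H) (hψd : HasDerivAt ψ ψd θ0)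
    (hphase : ⟪ψ θ0, ψd⟫ = 0)
    (e : OrthonormalBasis (Fin D) ℂ H)
    -- ⟨e i| M |e i⟩ = 0 for M = |ψ_{θ0}⟩⟨ψ̇_{θ0}| - |ψ̇_{θ0}⟩⟨ψ_{θ0}|
    (hM : ∀ i, ⟪e i, ψ θ0⟫ * ⟪ψd, e i⟫ - ⟪e i, ψd⟫ * ⟪ψ θ0, e i⟫ = 0)
    (hunif : ∀ i, ‖⟪e i, ψ θ0⟫‖ ^ 2 = 1 / D)
    (p : ℝ → Fin D → ℝ) (hp : ∀ θ i, p θ i = ‖⟪e i, ψ θ⟫‖ ^ 2)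
    (pd : Fin D → ℝ) (hpd : ∀ i, HasDerivAt (fun θ => p θ i) (pd i) θ0) :
    ∑ i : Fin D, (p θ0 i)⁻¹ * (pd i) ^ 2 = 4 * ‖ψd‖ ^ 2 :=
  projective_measurement_saturates_QCRB_general D θ0 ψ ψd hψd e hM hunif p hp pd hpd
end

section
/- Let ψ_θ be a unit-vector family in a finite-dimensional complex Hilbert space H, differentiable in θ. For any orthonormal basis {e_i} of H, the classical Fisher information of the corresponding projective measurement is bounded by the quantum Fisher information: Σ_{i: p_{θ0}(i)>0} p_{θ0}(i)^{−1} (p'_{θ0}(i))² ≤ 4(‖ψ̇_{θ0}‖² − |⟨ψ_{θ0}, ψ̇_{θ0}⟩|²), where p_θ(i) = |⟨e_i, ψ_θ⟩|². -/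
/-!
Since `‖ψ_θ‖ = 1`, the number `c = ⟨ψ, ψ̇⟩` is purely imaginary, so `p'(i) = 2 Re(conj aᵢ bᵢ)`
(with `aᵢ = ⟨eᵢ, ψ⟩`, `bᵢ = ⟨eᵢ, ψ̇⟩`) does not change when `ψ̇` is replaced by its component
`φ = ψ̇ - c ψ` orthogonal to `ψ`. Cauchy–Schwarz then gives `p(i)⁻¹ p'(i)² ≤ 4 |⟨eᵢ, φ⟩|²`, and
summing over the basis (Parseval) yields `4 ‖φ‖² = 4 (‖ψ̇‖² - |c|²)`.
-/

open scoped ComplexInnerProductSpace BigOperators Classical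

section

open RCLike
open scoped InnerProductSpace

variable {𝕜 E : Type*} [RCLike 𝕜] [NormedAddCommGroup E] [InnerProductSpace 𝕜 E]

theorem RCLike.real_inner_mul_self_right (c z : 𝕜) : ⟪z, c * z⟫_ℝ = re c * ‖z‖ ^ 2 := by
  change re (c * z * starRingEnd 𝕜 z) = _
  rw [mul_assoc, mul_comm z, RCLike.conj_mul, ← ofReal_pow, re_mul_ofReal]

theorem HasDerivAt.re_inner_eq_zero_of_norm_eq [NormedSpace ℝ E] {f : ℝ → E} {f' : E} {x r : ℝ}
    (hf : HasDerivAt f f' x) (hr : ∀ t, ‖f t‖ = r) : re ⟪f x, f'⟫_𝕜 = 0 := by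
  have hconst : (fun t => ⟪f t, f t⟫_𝕜) = fun _ => ((r : 𝕜) ^ 2) := by
    funext t
    rw [inner_self_eq_norm_sq_to_K, hr]
  have hderiv := hf.inner 𝕜 hf
  rw [hconst, ← inner_conj_symm f' (f x)] at hderiv
  have := congrArg re ((hasDerivAt_const x _).unique hderiv)
  rw [map_zero, map_add, conj_re] at this
  linarith

theorem norm_sub_inner_smul_sq_of_norm_eq_one {u : E} (hu : ‖u‖ = 1) (x : E) :
    ‖x - ⟪u, x⟫_𝕜 • u‖ ^ 2 = ‖x‖ ^ 2 - ‖⟪u, x⟫_𝕜‖ ^ 2 := by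
  rw [@norm_sub_sq 𝕜, inner_smul_right, ← inner_conj_symm, RCLike.conj_mul, norm_smul, hu, mul_one,
    RCLike.norm_conj, ← ofReal_pow, ofReal_re]
  ring

theorem HasDerivAt.norm_inner_sq [NormedSpace ℝ E] {f : ℝ → E} {f' : E} {x : ℝ} (v : E)
    (hf : HasDerivAt f f' x) :
    HasDerivAt (fun t => ‖⟪v, f t⟫_𝕜‖ ^ 2) (2 * ⟪⟪v, f x⟫_𝕜, ⟪v, f'⟫_𝕜⟫_ℝ) x := by
  simpa using ((hasDerivAt_const x v).inner 𝕜 hf).norm_sq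

theorem inv_norm_sq_mul_inner_sq_le {F : Type*} [NormedAddCommGroup F] [InnerProductSpace ℝ F]
    (a w : F) : (‖a‖ ^ 2)⁻¹ * ⟪a, w⟫_ℝ ^ 2 ≤ ‖w‖ ^ 2 := by
  rcases eq_or_ne a 0 with rfl | ha
  · simp
  have hcs : ⟪a, w⟫_ℝ ^ 2 ≤ ‖a‖ ^ 2 * ‖w‖ ^ 2 := by
    rw [← mul_pow, ← sq_abs]
    exact pow_le_pow_left₀ (abs_nonneg _) (abs_real_inner_le_norm a w) 2
  rwa [inv_mul_le_iff₀ (by positivity)]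

end

theorem projective_CFI_le_QFI_general
    {H : Type*} [NormedAddCommGroup H] [InnerProductSpace ℂ H]
    {ι : Type*} [Fintype ι]
    (θ0 : ℝ) (ψ : ℝ → H) (hψ : ∀ θ, ‖ψ θ‖ = 1)
    (ψd : H) (hψd : HasDerivAt ψ ψd θ0)
    (e : OrthonormalBasis ι ℂ H)
    (p : ℝ → ι → ℝ) (hp : ∀ θ i, p θ i = ‖⟪e i, ψ θ⟫‖ ^ 2)
    (pd : ι → ℝ) (hpd : ∀ i, HasDerivAt (fun θ => p θ i) (pd i) θ0) :
    (∑ i ∈ Finset.univ.filter (fun i => p θ0 i ≠ 0), (p θ0 i)⁻¹ * (pd i) ^ 2)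
      ≤ 4 * (‖ψd‖ ^ 2 - ‖⟪ψ θ0, ψd⟫‖ ^ 2) := by
  set c : ℂ := ⟪ψ θ0, ψd⟫
  set φ : H := ψd - c • ψ θ0
  have hc : RCLike.re c = 0 := hψd.re_inner_eq_zero_of_norm_eq hψ
  -- `0⁻¹ = 0`, so the bound also holds for the outcomes with `p θ0 i = 0` excluded from the sum.
  have hterm : ∀ i, (p θ0 i)⁻¹ * pd i ^ 2 ≤ 4 * ‖⟪e i, φ⟫‖ ^ 2 := by
    intro i
    have hp_deriv : HasDerivAt (fun θ => p θ i) (2 * inner ℝ ⟪e i, ψ θ0⟫ ⟪e i, ψd⟫) θ0 := by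
      simp only [hp]
      exact hψd.norm_inner_sq (e i)
    have hφ : ⟪e i, φ⟫ = ⟪e i, ψd⟫ - c * ⟪e i, ψ θ0⟫ := by
      rw [inner_sub_right, inner_smul_right]
    have hderiv : pd i = 2 * inner ℝ ⟪e i, ψ θ0⟫ ⟪e i, φ⟫ := by
      rw [(hpd i).unique hp_deriv, hφ, inner_sub_right, RCLike.real_inner_mul_self_right, hc]
      ring
    calc (p θ0 i)⁻¹ * pd i ^ 2
        = 4 * ((‖⟪e i, ψ θ0⟫‖ ^ 2)⁻¹ * inner ℝ ⟪e i, ψ θ0⟫ ⟪e i, φ⟫ ^ 2) := by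
          rw [hp, hderiv]; ring
      _ ≤ 4 * ‖⟪e i, φ⟫‖ ^ 2 := by gcongr; exact inv_norm_sq_mul_inner_sq_le _ _
  calc ∑ i ∈ Finset.univ.filter (fun i => p θ0 i ≠ 0), (p θ0 i)⁻¹ * pd i ^ 2
      ≤ ∑ i, 4 * ‖⟪e i, φ⟫‖ ^ 2 :=
        (Finset.sum_le_sum fun i _ => hterm i).trans <|
          Finset.sum_le_sum_of_subset_of_nonneg (Finset.filter_subset _ _)
            fun _ _ _ => by positivity
    _ = 4 * (‖ψd‖ ^ 2 - ‖c‖ ^ 2) := by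
      rw [← Finset.mul_sum, e.sum_sq_norm_inner_right,
        norm_sub_inner_smul_sq_of_norm_eq_one (hψ θ0)]

/-- classical Fisher information of any projective measurement is bounded
by the quantum Fisher information. For a differentiable unit-vector family `ψ_θ` and any
orthonormal basis `{e i}`, the classical Fisher information of the measurement
`p_θ(i) = |⟨e i, ψ_θ⟩|²` at `θ0` is at most `4(‖ψ̇‖² - |⟨ψ, ψ̇⟩|²)`. -/
theorem projective_CFI_le_QFI
    {H : Type*} [NormedAddCommGroup H] [InnerProductSpace ℂ H] [FiniteDimensional ℂ H]
    {ι : Type*} [Fintype ι]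
    (θ0 : ℝ) (ψ : ℝ → H) (hψ : ∀ θ, ‖ψ θ‖ = 1)
    (ψd : H) (hψd : HasDerivAt ψ ψd θ0)
    (e : OrthonormalBasis ι ℂ H)
    (p : ℝ → ι → ℝ) (hp : ∀ θ i, p θ i = ‖⟪e i, ψ θ⟫‖ ^ 2)
    (pd : ι → ℝ) (hpd : ∀ i, HasDerivAt (fun θ => p θ i) (pd i) θ0) :
    (∑ i ∈ Finset.univ.filter (fun i => p θ0 i ≠ 0), (p θ0 i)⁻¹ * (pd i) ^ 2)
      ≤ 4 * (‖ψd‖ ^ 2 - ‖⟪ψ θ0, ψd⟫‖ ^ 2) :=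
  projective_CFI_le_QFI_general θ0 ψ hψ ψd hψd e p hp pd hpd
end

section
/- Let {W_θ} be a differentiable family of unitaries on ℂ^D ⊗ ℂ^k, with W = W_{θ0}, Ẇ = (d/dθ)W_θ|_{θ0}, and unit vectors ψ ∈ ℂ^D, χ ∈ ℂ^k satisfying W(ψ⊗χ) = ψ⊗χ and ⟨ψ⊗χ| W*Ẇ |ψ⊗χ⟩ = 0. For n ≥ 1 set Ψ_θ(n) = W_θ^(n)···W_θ^(1)(ψ⊗χ^⊗n) and M^(n) = |Ψ_{θ0}(n)⟩⟨Ψ̇_{θ0}(n)| − |Ψ̇_{θ0}(n)⟩⟨Ψ_{θ0}(n)|. Fix 1 ≤ j ≤ n, and for each l < j let {e^[l]_i}_{i=1}^k be an orthonormal basis of ℂ^k with |⟨e^[l]_i, χ⟩|² = 1/k for all i (each basis possibly depending on the previous outcomes i_1,…,i_{l−1}). Then for any outcome record (i_1,…,i_{j−1}), the operator on the j-th noise unit obtained by first contracting M^(n) with |e^[1]_{i_1}⟩⊗···⊗|e^[j−1]_{i_{j−1}}⟩ on units 1,…,j−1 and then taking the partial trace over the system ℂ^D and units j+1,…,n coincides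 with the corresponding operator computed from M^(j) (the same construction with output length j): M^(n)_j(i_1,…,i_{j−1}) = M^(j)_j(i_1,…,i_{j−1}). -/
open scoped BigOperators Matrix Kronecker ComplexConjugate Classical
open Matrix

noncomputable section

/-- `M = |v⟩⟨w| - |w⟩⟨v|`. -/
def mmat {α : Type*} (v w : α → ℂ) : Matrix α α ℂ := outer v w - outer w v

/-- Contraction of an operator `A` on `ℂ^D ⊗ (ℂ^k)^⊗n` with the vectors `w 0, …, w (m-1)`
on the first `m` noise units, followed by the partial trace over the system and over the
noise units `m+1, …, n-1`; the result is an operator on the `m`-th noise unit `ℂ^k`. -/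
def ctrNoise {D k : ℕ} (n m : ℕ) (hm : m < n)
    (A : Matrix (Fin D × (Fin n → Fin k)) (Fin D × (Fin n → Fin k)) ℂ)
    (w : ℕ → Fin k → ℂ) : Matrix (Fin k) (Fin k) ℂ :=
  fun u v => ∑ s : Fin D, ∑ g : Fin n → Fin k, ∑ g' : Fin n → Fin k,
    if g ⟨m, hm⟩ = u ∧ g' ⟨m, hm⟩ = v ∧ (∀ l : Fin n, m < (l : ℕ) → g l = g' l) then
      (∏ l : Fin n, if (l : ℕ) < m then conj (w (l : ℕ) (g l)) * w (l : ℕ) (g' l) else 1)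
        * A (s, g) (s, g')
    else 0

/-! At `θ₀` the state is stationary, `Ψ(N) = ψ ⊗ χ^⊗N`, and differentiating
`Ψ_θ(N+1) = W_θ^(N+1) (Ψ_θ(N) ⊗ χ)` gives `Ψ̇(N+1) = Ẇ(ψ ⊗ χ) ⊗ χ^⊗N + W^(N+1) (Ψ̇(N) ⊗ χ)`.
Tracing out the last unit together with the system, the first term drops out of `M^(N+1)`
because `⟨ψ ⊗ χ, Ẇ (ψ ⊗ χ)⟩ = 0`, and in the second the unitary `W` cancels against its
adjoint, leaving the contribution of `M^(N)`. Induction on the output length from `j` up to `n`. -/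

namespace RepeatedInteraction

section InnerProduct

variable {ι : Type*} [Fintype ι]

lemma inn_eq_star_dotProduct (v w : ι → ℂ) : inn v w = star v ⬝ᵥ w := rfl

lemma inn_swap (v w : ι → ℂ) : inn w v = conj (inn v w) := by
  simp only [inn, map_sum, map_mul, Complex.conj_conj, mul_comm]

lemma inn_add_left (u v w : ι → ℂ) : inn (u + v) w = inn u w + inn v w := by
  simp only [inn_eq_star_dotProduct, star_add, add_dotProduct]

lemma inn_smul_smul (a b : ℂ) (v w : ι → ℂ) : inn (a • v) (b • w) = conj a * b * inn v w := by
  simp only [inn, Pi.smul_apply, smul_eq_mul, map_mul, Finset.mul_sum]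
  exact Finset.sum_congr rfl fun _ _ => by ring

lemma inn_self (v : ι → ℂ) : inn v v = nsq v := by
  simp only [inn, nsq, Complex.ofReal_sum, Complex.normSq_eq_conj_mul_self]

lemma inn_mulVec_left [DecidableEq ι] (U : Matrix ι ι ℂ) (v w : ι → ℂ) :
    inn (U *ᵥ v) w = inn v (Uᴴ *ᵥ w) := by
  rw [inn_eq_star_dotProduct, inn_eq_star_dotProduct, star_mulVec, dotProduct_mulVec]

lemma inn_mulVec_mulVec_of_mem_unitaryGroup [DecidableEq ι] {U : Matrix ι ι ℂ}
    (hU : U ∈ Matrix.unitaryGroup ι ℂ) (v w : ι → ℂ) : inn (U *ᵥ v) (U *ᵥ w) = inn v w := by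
  rw [inn_mulVec_left, mulVec_mulVec, ← star_eq_conjTranspose,
    Matrix.mem_unitaryGroup_iff'.mp hU, one_mulVec]

lemma inn_vtens {α : Type*} [Fintype α] (v w : α → ℂ) (χ χ' : ι → ℂ) :
    inn (vtens v χ) (vtens w χ') = inn v w * inn χ χ' := by
  simp only [inn, vtens, Fintype.sum_prod_type, Finset.sum_mul_sum, map_mul]
  exact Finset.sum_congr rfl fun _ _ => Finset.sum_congr rfl fun _ _ => by ring

end InnerProduct

section States

variable {α ι : Type*}

def slice {β : Type*} (f : α × β → ℂ) (b : β) : α → ℂ := fun a => f (a, b)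

def lastSlice {N : ℕ} (F : α × (Fin (N + 1) → ι) → ℂ) (g : Fin N → ι) : α × ι → ℂ :=
  fun q => F (q.1, Fin.snoc g q.2)

lemma lastSlice_add {N : ℕ} (F G : α × (Fin (N + 1) → ι) → ℂ) (g : Fin N → ι) :
    lastSlice (F + G) g = lastSlice F g + lastSlice G g := rfl

lemma eq_of_lastSlice_eq {N : ℕ} {F G : α × (Fin (N + 1) → ι) → ℂ}
    (h : ∀ g, lastSlice F g = lastSlice G g) : F = G := by
  funext ⟨s, g⟩
  simpa [lastSlice, Fin.snoc_init_self] using congrFun (h (Fin.init g)) (s, g (Fin.last N))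

lemma slice_vtens_vpow {N : ℕ} (ψ : α → ℂ) (χ : ι → ℂ) (g : Fin N → ι) :
    slice (vtens ψ (vpow N χ)) g = vpow N χ g • ψ := by
  funext a
  simp [slice, vtens, mul_comm]

lemma vtens_smul_left {β : Type*} (c : ℂ) (v : α → ℂ) (w : β → ℂ) :
    vtens (c • v) w = c • vtens v w := by
  funext q
  simp [vtens, mul_assoc]

lemma vpow_snoc {N : ℕ} (χ : ι → ℂ) (g : Fin N → ι) (i : ι) :
    vpow (N + 1) χ (Fin.snoc g i) = vpow N χ g * χ i := by
  simp [vpow, Fin.prod_univ_castSucc]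

lemma lastSlice_vtens_vpow {N : ℕ} (ψ : α → ℂ) (χ : ι → ℂ) (g : Fin N → ι) :
    lastSlice (vtens ψ (vpow (N + 1) χ)) g = vpow N χ g • vtens ψ χ := by
  funext q
  simp [lastSlice, vtens, vpow_snoc]
  ring

variable [Fintype α] [Fintype ι]

lemma sum_snoc {M : Type*} [AddCommMonoid M] {N : ℕ} (F : (Fin (N + 1) → ι) → M) :
    ∑ g, F g = ∑ g : Fin N → ι, ∑ i, F (Fin.snoc g i) := by
  rw [← (Fin.snocEquiv fun _ => ι).sum_comp, Fintype.sum_prod_type, Finset.sum_comm]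
  rfl

/-- The new noise unit, prepared in `χ`, is appended to the state `f` and `U` acts on the
system and that unit. -/
def stepVec {N : ℕ} (U : Matrix (α × ι) (α × ι) ℂ) (χ : ι → ℂ) (f : α × (Fin N → ι) → ℂ) :
    α × (Fin (N + 1) → ι) → ℂ :=
  fun p => (U *ᵥ vtens (slice f (Fin.init p.2)) χ) (p.1, p.2 (Fin.last N))

lemma lastSlice_stepVec {N : ℕ} (U : Matrix (α × ι) (α × ι) ℂ) (χ : ι → ℂ)
    (f : α × (Fin N → ι) → ℂ) (g : Fin N → ι) :
    lastSlice (stepVec U χ f) g = U *ᵥ vtens (slice f g) χ := by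
  funext q
  simp [lastSlice, stepVec]

lemma stepVec_vtens_vpow {N : ℕ} {U : Matrix (α × ι) (α × ι) ℂ} {ψ : α → ℂ} {χ : ι → ℂ}
    (hfix : U *ᵥ vtens ψ χ = vtens ψ χ) :
    stepVec U χ (vtens ψ (vpow N χ)) = vtens ψ (vpow (N + 1) χ) := by
  refine eq_of_lastSlice_eq fun g => ?_
  rw [lastSlice_stepVec, lastSlice_vtens_vpow, slice_vtens_vpow, vtens_smul_left, mulVec_smul,
    hfix]

lemma hasDerivAt_stepVec {N : ℕ} {U : ℝ → Matrix (α × ι) (α × ι) ℂ}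
    {U' : Matrix (α × ι) (α × ι) ℂ} {f : ℝ → α × (Fin N → ι) → ℂ} {f' : α × (Fin N → ι) → ℂ}
    {θ₀ : ℝ} (χ : ι → ℂ) (hU : ∀ x y, HasDerivAt (fun θ => U θ x y) (U' x y) θ₀)
    (hf : ∀ x, HasDerivAt (fun θ => f θ x) (f' x) θ₀) (p : α × (Fin (N + 1) → ι)) :
    HasDerivAt (fun θ => stepVec (U θ) χ (f θ) p)
      (stepVec U' χ (f θ₀) p + stepVec (U θ₀) χ f' p) θ₀ := by
  simp only [stepVec, mulVec, dotProduct, vtens, slice, ← Finset.sum_add_distrib]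
  refine HasDerivAt.fun_sum fun q _ => ?_
  exact (hU _ q).fun_mul ((hf (q.1, Fin.init p.2)).mul_const (χ q.2))

end States

section Steps

variable {α ι : Type*} [Fintype α] [Fintype ι] [DecidableEq α] [DecidableEq ι]

/-- Ampliation `A ⊗ 1` of an operator on the system and the first `N` noise units by the
identity on an appended noise unit. -/
def ampInit (N : ℕ) : Matrix (α × (Fin N → ι)) (α × (Fin N → ι)) ℂ →*
    Matrix (α × (Fin (N + 1) → ι)) (α × (Fin (N + 1) → ι)) ℂ where
  toFun A := Matrix.of fun p q =>
    if p.2 (Fin.last N) = q.2 (Fin.last N) then A (p.1, Fin.init p.2) (q.1, Fin.init q.2) else 0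
  map_one' := by
    ext ⟨s, g⟩ ⟨t, h⟩
    rw [← Fin.snoc_init_self g, ← Fin.snoc_init_self h]
    simp only [Fin.snoc_last, Fin.init_snoc, of_apply, one_apply, Prod.mk.injEq, Fin.snoc_inj]
    split_ifs <;> tauto
  map_mul' A B := by
    ext ⟨s, g⟩ ⟨t, h⟩
    simp only [of_apply, mul_apply, Fintype.sum_prod_type, sum_snoc, Fin.snoc_last, Fin.init_snoc,
      ite_mul, zero_mul, mul_ite, mul_zero, Finset.sum_ite_eq', Finset.mem_univ, if_true]
    split_ifs <;> simp

lemma amp_castSucc (N : ℕ) (U : Matrix (α × ι) (α × ι) ℂ) (j : Fin N) :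
    amp (N + 1) U j.castSucc = ampInit N (amp N U j) := by
  ext ⟨s, g⟩ ⟨t, h⟩
  rw [← Fin.snoc_init_self g, ← Fin.snoc_init_self h]
  simp only [amp, ampInit, MonoidHom.coe_mk, OneHom.coe_mk, of_apply, Fin.snoc_last,
    Fin.init_snoc, Fin.snoc_castSucc, Fin.forall_fin_succ', Fin.castSucc_inj, ne_eq,
    (Fin.castSucc_lt_last j).ne', not_false_eq_true, forall_const]
  split_ifs <;> tauto

lemma steps_succ (N : ℕ) (U : Matrix (α × ι) (α × ι) ℂ) :
    steps (N + 1) U = amp (N + 1) U (Fin.last N) * ampInit N (steps N U) := by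
  have hinit : (List.ofFn fun j : Fin N => amp (N + 1) U j.castSucc)
      = (List.ofFn fun j => amp N U j).map (ampInit N) := by
    simp only [List.map_ofFn, Function.comp_def, amp_castSucc]
  rw [steps, List.ofFn_succ', List.concat_eq_append, List.reverse_concat, List.prod_cons, hinit,
    ← List.map_reverse, List.prod_hom, steps]

omit [DecidableEq α] in
lemma lastSlice_amp_last_mulVec {N : ℕ} (U : Matrix (α × ι) (α × ι) ℂ)
    (F : α × (Fin (N + 1) → ι) → ℂ) (g : Fin N → ι) :
    lastSlice (amp (N + 1) U (Fin.last N) *ᵥ F) g = U *ᵥ lastSlice F g := by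
  funext ⟨s, i⟩
  simp only [lastSlice, mulVec, dotProduct, Fintype.sum_prod_type, sum_snoc, amp,
    Fin.forall_fin_succ', Fin.snoc_castSucc, Fin.snoc_last, ne_eq, Fin.castSucc_ne_last,
    not_true_eq_false, not_false_eq_true, forall_const, IsEmpty.forall_iff, and_true]
  simp only [← funext_iff, ite_mul, zero_mul, Finset.sum_ite_irrel, Finset.sum_const_zero,
    Finset.sum_ite_eq, Finset.mem_univ, if_true]

lemma lastSlice_ampInit_mulVec_vtens_vpow {N : ℕ}
    (A : Matrix (α × (Fin N → ι)) (α × (Fin N → ι)) ℂ) (ψ : α → ℂ) (χ : ι → ℂ) (g : Fin N → ι) :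
    lastSlice (ampInit N A *ᵥ vtens ψ (vpow (N + 1) χ)) g
      = vtens (slice (A *ᵥ vtens ψ (vpow N χ)) g) χ := by
  funext ⟨s, i⟩
  simp only [lastSlice, mulVec, dotProduct, Fintype.sum_prod_type, sum_snoc, ampInit,
    MonoidHom.coe_mk, OneHom.coe_mk, of_apply, Fin.snoc_last, Fin.init_snoc, vtens, slice,
    ite_mul, zero_mul, Finset.sum_ite_eq, Finset.mem_univ, if_true, vpow_snoc, Finset.sum_mul]
  exact Finset.sum_congr rfl fun _ _ => Finset.sum_congr rfl fun _ _ => by ring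

lemma steps_mulVec_succ (N : ℕ) (U : Matrix (α × ι) (α × ι) ℂ) (ψ : α → ℂ) (χ : ι → ℂ) :
    steps (N + 1) U *ᵥ vtens ψ (vpow (N + 1) χ)
      = stepVec U χ (steps N U *ᵥ vtens ψ (vpow N χ)) := by
  refine eq_of_lastSlice_eq fun g => ?_
  rw [steps_succ, ← mulVec_mulVec, lastSlice_amp_last_mulVec,
    lastSlice_ampInit_mulVec_vtens_vpow, lastSlice_stepVec]

lemma steps_mulVec_of_fixed {U : Matrix (α × ι) (α × ι) ℂ} {ψ : α → ℂ} {χ : ι → ℂ}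
    (hfix : U *ᵥ vtens ψ χ = vtens ψ χ) (N : ℕ) :
    steps N U *ᵥ vtens ψ (vpow N χ) = vtens ψ (vpow N χ) := by
  induction N with
  | zero => simp [steps]
  | succ N ih => rw [steps_mulVec_succ, ih, stepVec_vtens_vpow hfix]

end Steps

section Contraction

variable {α ι : Type*} [Fintype α] [Fintype ι]

lemma sum_mmat_apply {β : Type*} (f f' : α × β → ℂ) (b b' : β) :
    ∑ s, mmat f f' (s, b) (s, b')
      = inn (slice f' b') (slice f b) - inn (slice f b') (slice f' b) := by
  simp only [mmat, outer, inn, slice, Matrix.sub_apply, Finset.sum_sub_distrib, mul_comm]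

lemma sum_sum_mmat_snoc {N : ℕ} (F F' : α × (Fin (N + 1) → ι) → ℂ) (g g' : Fin N → ι) :
    ∑ i, ∑ s, mmat F F' (s, Fin.snoc g i) (s, Fin.snoc g' i)
      = inn (lastSlice F' g') (lastSlice F g) - inn (lastSlice F g') (lastSlice F' g) := by
  rw [Finset.sum_comm]
  simp only [mmat, outer, inn, lastSlice, Matrix.sub_apply, Finset.sum_sub_distrib, mul_comm,
    Fintype.sum_prod_type]

variable {D k : ℕ}

def ctrNoiseCoeff (n m : ℕ) (hm : m < n) (w : ℕ → Fin k → ℂ) (u v : Fin k)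
    (g g' : Fin n → Fin k) : ℂ :=
  if g ⟨m, hm⟩ = u ∧ g' ⟨m, hm⟩ = v ∧ (∀ l : Fin n, m < (l : ℕ) → g l = g' l) then
    ∏ l : Fin n, if (l : ℕ) < m then conj (w (l : ℕ) (g l)) * w (l : ℕ) (g' l) else 1
  else 0

lemma ctrNoise_apply_eq_sum_ctrNoiseCoeff (n m : ℕ) (hm : m < n)
    (A : Matrix (Fin D × (Fin n → Fin k)) (Fin D × (Fin n → Fin k)) ℂ) (w : ℕ → Fin k → ℂ)
    (u v : Fin k) :
    ctrNoise n m hm A w u v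
      = ∑ g, ∑ g', ctrNoiseCoeff n m hm w u v g g' * ∑ s, A (s, g) (s, g') := by
  rw [ctrNoise, Finset.sum_comm]
  refine Finset.sum_congr rfl fun g _ => ?_
  rw [Finset.sum_comm]
  refine Finset.sum_congr rfl fun g' _ => ?_
  simp only [ctrNoiseCoeff, ite_mul, zero_mul, Finset.mul_sum, Finset.sum_ite_irrel,
    Finset.sum_const_zero]

lemma ctrNoiseCoeff_snoc {N m : ℕ} (hmN : m < N) (hm1 : m < N + 1) (w : ℕ → Fin k → ℂ)
    (u v : Fin k) (g g' : Fin N → Fin k) (i i' : Fin k) :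
    ctrNoiseCoeff (N + 1) m hm1 w u v (Fin.snoc g i) (Fin.snoc g' i')
      = if i = i' then ctrNoiseCoeff N m hmN w u v g g' else 0 := by
  have hcast : (⟨m, hm1⟩ : Fin (N + 1)) = Fin.castSucc ⟨m, hmN⟩ := rfl
  simp only [ctrNoiseCoeff, hcast, Fin.snoc_castSucc, Fin.forall_fin_succ', Fin.snoc_last,
    Fin.val_castSucc, Fin.val_last, Fin.prod_univ_castSucc, hmN, not_lt_of_gt hmN, forall_const,
    if_false, mul_one]
  by_cases hii : i = i' <;> simp only [hii, and_true, and_false, if_true, if_false]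

lemma ctrNoise_succ {N m : ℕ} (hmN : m < N) (hm1 : m < N + 1)
    (A : Matrix (Fin D × (Fin (N + 1) → Fin k)) (Fin D × (Fin (N + 1) → Fin k)) ℂ)
    (B : Matrix (Fin D × (Fin N → Fin k)) (Fin D × (Fin N → Fin k)) ℂ) (w : ℕ → Fin k → ℂ)
    (hAB : ∀ g g', ∑ i, ∑ s, A (s, Fin.snoc g i) (s, Fin.snoc g' i) = ∑ s, B (s, g) (s, g')) :
    ctrNoise (N + 1) m hm1 A w = ctrNoise N m hmN B w := by
  ext u v
  simp only [ctrNoise_apply_eq_sum_ctrNoiseCoeff, sum_snoc, ctrNoiseCoeff_snoc hmN hm1, ite_mul,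
    zero_mul, Finset.mul_sum, Finset.sum_ite_irrel, Finset.sum_const_zero, Finset.sum_ite_eq,
    Finset.mem_univ, if_true, ← hAB]
  exact Finset.sum_congr rfl fun g _ => Finset.sum_comm

end Contraction

section OneStep

variable {α ι : Type*} [Fintype α] [Fintype ι] [DecidableEq α] [DecidableEq ι]

lemma inn_lastSlice_succ {N : ℕ} {U₀ U' : Matrix (α × ι) (α × ι) ℂ}
    (hU : U₀ ∈ Matrix.unitaryGroup (α × ι) ℂ) {ψ : α → ℂ} {χ : ι → ℂ} (hχ : nsq χ = 1)
    (hfix : U₀ *ᵥ vtens ψ χ = vtens ψ χ) (hphase : inn (vtens ψ χ) (U' *ᵥ vtens ψ χ) = 0)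
    (f : α × (Fin N → ι) → ℂ) (g g' : Fin N → ι) :
    inn (lastSlice (stepVec U' χ (vtens ψ (vpow N χ)) + stepVec U₀ χ f) g')
        (lastSlice (vtens ψ (vpow (N + 1) χ)) g)
      = inn (slice f g') (slice (vtens ψ (vpow N χ)) g) := by
  rw [← stepVec_vtens_vpow hfix, lastSlice_add, lastSlice_stepVec, lastSlice_stepVec,
    lastSlice_stepVec, inn_add_left, inn_mulVec_mulVec_of_mem_unitaryGroup hU, inn_vtens,
    inn_self, hχ, slice_vtens_vpow, slice_vtens_vpow, vtens_smul_left, vtens_smul_left,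
    mulVec_smul, mulVec_smul, hfix, inn_smul_smul, inn_swap, hphase]
  simp

end OneStep

lemma ctrNoise_mmat_stepVec {D k N m : ℕ} (hmN : m < N) (hm1 : m < N + 1)
    {U₀ U' : Matrix (Fin D × Fin k) (Fin D × Fin k) ℂ}
    (hU : U₀ ∈ Matrix.unitaryGroup (Fin D × Fin k) ℂ) {ψ : Fin D → ℂ} {χ : Fin k → ℂ}
    (hχ : nsq χ = 1) (hfix : U₀ *ᵥ vtens ψ χ = vtens ψ χ)
    (hphase : inn (vtens ψ χ) (U' *ᵥ vtens ψ χ) = 0) (f : Fin D × (Fin N → Fin k) → ℂ)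
    (w : ℕ → Fin k → ℂ) :
    ctrNoise (N + 1) m hm1
        (mmat (vtens ψ (vpow (N + 1) χ)) (stepVec U' χ (vtens ψ (vpow N χ)) + stepVec U₀ χ f)) w
      = ctrNoise N m hmN (mmat (vtens ψ (vpow N χ)) f) w := by
  refine ctrNoise_succ hmN hm1 _ _ w fun g g' => ?_
  rw [sum_sum_mmat_snoc, sum_mmat_apply, inn_lastSlice_succ hU hχ hfix hphase,
    inn_swap (lastSlice _ g), inn_lastSlice_succ hU hχ hfix hphase, ← inn_swap]

end RepeatedInteraction

open RepeatedInteraction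

/-- The target unit is the `m`-th one (0-indexed), so `j = m + 1`. -/
theorem filter_independent_of_output_length_general
    (D k n m : ℕ) (hm : m < n) (θ0 : ℝ)
    (W : ℝ → Matrix (Fin D × Fin k) (Fin D × Fin k) ℂ)
    (hWu : ∀ θ, W θ ∈ Matrix.unitaryGroup (Fin D × Fin k) ℂ)
    (Wd : Matrix (Fin D × Fin k) (Fin D × Fin k) ℂ)
    (hWd : ∀ x y, HasDerivAt (fun θ => W θ x y) (Wd x y) θ0)
    (ψ : Fin D → ℂ) (χ : Fin k → ℂ) (hχ : nsq χ = 1)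
    (hstat : (W θ0).mulVec (vtens ψ χ) = vtens ψ χ)
    (hphase : inn (vtens ψ χ) (((W θ0)ᴴ * Wd).mulVec (vtens ψ χ)) = 0)
    -- the joint states of all lengths and their derivatives at θ0
    (Ψ : (N : ℕ) → ℝ → (Fin D × (Fin N → Fin k)) → ℂ)
    (hΨ : ∀ N θ, Ψ N θ = (steps N (W θ)).mulVec (vtens ψ (vpow N χ)))
    (Ψd : (N : ℕ) → (Fin D × (Fin N → Fin k)) → ℂ)
    (hΨd : ∀ N x, HasDerivAt (fun θ => Ψ N θ x) (Ψd N x) θ0)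
    -- the measurement bases used on the first m units (for the fixed outcome record)
    (E : ℕ → Fin k → Fin k → ℂ)
    -- the outcome record
    (ii : ℕ → Fin k) :
    ctrNoise n m hm (mmat (Ψ n θ0) (Ψd n)) (fun l => E l (ii l))
      = ctrNoise (m + 1) m (Nat.lt_succ_self m)
          (mmat (Ψ (m + 1) θ0) (Ψd (m + 1))) (fun l => E l (ii l)) := by
  have hstate : ∀ N, Ψ N θ0 = vtens ψ (vpow N χ) := fun N => by
    rw [hΨ, steps_mulVec_of_fixed hstat]
  have hrec : ∀ N θ, Ψ (N + 1) θ = stepVec (W θ) χ (Ψ N θ) := fun N θ => by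
    rw [hΨ, hΨ, steps_mulVec_succ]
  have hderiv : ∀ N, Ψd (N + 1) = stepVec Wd χ (vtens ψ (vpow N χ)) + stepVec (W θ0) χ (Ψd N) :=
    fun N => funext fun p => (hΨd (N + 1) p).unique <| by
      simpa only [hrec, hstate, Pi.add_apply] using hasDerivAt_stepVec χ hWd (hΨd N) p
  rw [← mulVec_mulVec, ← inn_mulVec_left, hstat] at hphase
  induction n, hm using Nat.le_induction with
  | base => rfl
  | succ N hmN ih =>
    rw [← ih, hderiv, hstate, hstate]
    exact ctrNoise_mmat_stepVec hmN _ (hWu θ0) hχ hstat hphase _ _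

/-- the measurement-filter operator `M⁽ⁿ⁾_j(i₁,…,i_{j-1})` obtained from
the length-`n` output does not depend on the output length: it equals the same operator
computed from the length-`j` output, `M⁽ʲ⁾_j(i₁,…,i_{j-1})`.
(0-indexed: the target unit is the `m`-th one, `j = m+1`.) -/
theorem filter_independent_of_output_length
    (D k n m : ℕ) (hm : m < n) (θ0 : ℝ)
    (W : ℝ → Matrix (Fin D × Fin k) (Fin D × Fin k) ℂ)
    (hWu : ∀ θ, W θ ∈ Matrix.unitaryGroup (Fin D × Fin k) ℂ)
    (Wd : Matrix (Fin D × Fin k) (Fin D × Fin k) ℂ)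
    (hWd : ∀ x y, HasDerivAt (fun θ => W θ x y) (Wd x y) θ0)
    (ψ : Fin D → ℂ) (χ : Fin k → ℂ) (hψ : nsq ψ = 1) (hχ : nsq χ = 1)
    (hstat : (W θ0).mulVec (vtens ψ χ) = vtens ψ χ)
    (hphase : inn (vtens ψ χ) (((W θ0)ᴴ * Wd).mulVec (vtens ψ χ)) = 0)
    -- the joint states of all lengths and their derivatives at θ0
    (Ψ : (N : ℕ) → ℝ → (Fin D × (Fin N → Fin k)) → ℂ)
    (hΨ : ∀ N θ, Ψ N θ = (steps N (W θ)).mulVec (vtens ψ (vpow N χ)))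
    (Ψd : (N : ℕ) → (Fin D × (Fin N → Fin k)) → ℂ)
    (hΨd : ∀ N x, HasDerivAt (fun θ => Ψ N θ x) (Ψd N x) θ0)
    -- the measurement bases used on the first m units (for the fixed outcome record)
    (E : ℕ → Fin k → Fin k → ℂ)
    (honb : ∀ l, l < m → ∀ i i', inn (E l i) (E l i') = if i = i' then 1 else 0)
    (hunif : ∀ l, l < m → ∀ i, Complex.normSq (inn (E l i) χ) = 1 / k)
    -- the outcome record
    (ii : ℕ → Fin k) :
    ctrNoise n m hm (mmat (Ψ n θ0) (Ψd n)) (fun l => E l (ii l))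
      = ctrNoise (m + 1) m (Nat.lt_succ_self m)
          (mmat (Ψ (m + 1) θ0) (Ψd (m + 1))) (fun l => E l (ii l)) :=
  filter_independent_of_output_length_general D k n m hm θ0 W hWu Wd hWd ψ χ hχ hstat hphase Ψ hΨ Ψd
    hΨd E ii
end
end

section
/- For the qubit amplitude-decay model with parameters λ ∈ (0,1), a = √(1−λ), b = √λ, φ ∈ ℝ, and for any 2 ≤ l ≤ n, the derivative vector associated to the outcome string with a single 1 in position l satisfies Σ_{j=1}^n K_{i_n}···K̇_{i_j}···K_{i_1}|0⟩ = i b e^{iφ} (1 − a^{l−1})/(1 − a) |0⟩ + a^{n−l} |1⟩, where (i_1,…,i_n) has i_l = 1 and i_m = 0 for m ≠ l; consequently its squared norm equals b² ((1 − a^{l−1})/(1 − a))² + a^{2(n−l)}. -/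
open scoped BigOperators Matrix ComplexConjugate Classical
open Matrix

noncomputable section

/-- The initial (stationary) system state `|0⟩`. -/
def ket0 : Fin 2 → ℂ := fun i => if i = 0 then 1 else 0

def ket1 : Fin 2 → ℂ := fun i => if i = 1 then 1 else 0

lemma kprodTo_zero {α : Type*} [Fintype α] [DecidableEq α] {n : ℕ}
    (A : Fin n → Matrix α α ℂ) : kprodTo A 0 = 1 := by simp [kprodTo]

lemma kprodFrom_last {α : Type*} [Fintype α] [DecidableEq α] {n : ℕ}
    (A : Fin n → Matrix α α ℂ) : kprodFrom A n = 1 := by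
  unfold kprodFrom
  rw [List.drop_of_length_le (by simp)]
  simp

lemma kprodTo_succ {α : Type*} [Fintype α] [DecidableEq α] {n : ℕ}
    (A : Fin n → Matrix α α ℂ) (j : ℕ) (hj : j < n) :
    kprodTo A (j + 1) = A ⟨j, hj⟩ * kprodTo A j := by
  unfold kprodTo
  rw [List.take_succ]
  have h : (List.ofFn A)[j]? = some (A ⟨j, hj⟩) := by
    rw [List.getElem?_eq_getElem (by simpa using hj)]
    simp
  rw [h]
  simp

lemma kprodFrom_succ {α : Type*} [Fintype α] [DecidableEq α] {n : ℕ}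
    (A : Fin n → Matrix α α ℂ) (j : ℕ) (hj : j < n) :
    kprodFrom A j = kprodFrom A (j + 1) * A ⟨j, hj⟩ := by
  unfold kprodFrom
  rw [List.drop_eq_getElem_cons (by simpa using hj)]
  simp

lemma K0_ket0 (a b φ : ℝ) : (Kop a b φ 0) *ᵥ ket0 = ket0 := by
  funext i; fin_cases i <;>
    simp [Kop, ket0, Matrix.mulVec, dotProduct, Fin.sum_univ_two]

lemma K0_ket1 (a b φ : ℝ) : (Kop a b φ 0) *ᵥ ket1 = (a : ℂ) • ket1 := by
  funext i; fin_cases i <;>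
    simp [Kop, ket1, Matrix.mulVec, dotProduct, Fin.sum_univ_two]

lemma K1_ket0 (a b φ : ℝ) : (Kop a b φ 1) *ᵥ ket0 = 0 := by
  funext i; fin_cases i <;>
    simp [Kop, ket0, Matrix.mulVec, dotProduct, Fin.sum_univ_two]

lemma K1_ket1 (a b φ : ℝ) :
    (Kop a b φ 1) *ᵥ ket1 = ((b : ℂ) * Complex.exp (Complex.I * φ)) • ket0 := by
  funext i; fin_cases i <;>
    simp [Kop, ket0, ket1, Matrix.mulVec, dotProduct, Fin.sum_univ_two]

lemma Kd0_ket0 (a : ℝ) : (Kdop a 0) *ᵥ ket0 = Complex.I • ket1 := by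
  funext i; fin_cases i <;>
    simp [Kdop, ket0, ket1, Matrix.mulVec, dotProduct, Fin.sum_univ_two]

lemma Kd1_ket0 (a : ℝ) : (Kdop a 1) *ᵥ ket0 = ket1 := by
  funext i; fin_cases i <;>
    simp [Kdop, ket0, ket1, Matrix.mulVec, dotProduct, Fin.sum_univ_two]

section model

variable {n l : ℕ} {a b φ : ℝ} {A : Fin n → Matrix (Fin 2) (Fin 2) ℂ}

lemma Tket0 (hA : ∀ m : Fin n, A m = Kop a b φ (if (m : ℕ) + 1 = l then 1 else 0)) :
    ∀ j, j ≤ n → j < l → (kprodTo A j) *ᵥ ket0 = ket0 := by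
  intro j
  induction j with
  | zero => intro _ _; rw [kprodTo_zero]; simp
  | succ j ih =>
    intro hjn hjl
    have hj : j < n := hjn
    rw [kprodTo_succ A j hj, ← mulVec_mulVec,
      ih (le_of_lt hj) (lt_trans (Nat.lt_succ_self j) hjl)]
    have : A ⟨j, hj⟩ = Kop a b φ 0 := by
      rw [hA ⟨j, hj⟩]; simp [Nat.ne_of_lt hjl]
    rw [this, K0_ket0]

lemma Tzero (hA : ∀ m : Fin n, A m = Kop a b φ (if (m : ℕ) + 1 = l then 1 else 0))
    (hl : 1 ≤ l) :
    ∀ j, l ≤ j → j ≤ n → (kprodTo A j) *ᵥ ket0 = 0 := by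
  intro j hlj
  induction j, hlj using Nat.le_induction with
  | base =>
    intro hn
    have h1 : l - 1 < n := by omega
    have hsub : l = (l - 1) + 1 := by omega
    rw [hsub, kprodTo_succ A (l-1) h1, ← mulVec_mulVec,
      Tket0 hA (l-1) (by omega) (by omega)]
    have : A ⟨l-1, h1⟩ = Kop a b φ 1 := by
      rw [hA ⟨l-1, h1⟩, if_pos]; simp only [Fin.val_mk]; omega
    rw [this, K1_ket0]
  | succ j hlj ih =>
    intro hn
    have hj : j < n := hn
    rw [kprodTo_succ A j hj, ← mulVec_mulVec, ih (by omega), mulVec_zero]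

lemma Fket0 (hA : ∀ m : Fin n, A m = Kop a b φ (if (m : ℕ) + 1 = l then 1 else 0)) :
    ∀ k j, j + k = n → l ≤ j → (kprodFrom A j) *ᵥ ket0 = ket0 := by
  intro k
  induction k with
  | zero => intro j hj _; rw [show j = n by omega, kprodFrom_last, one_mulVec]
  | succ k ih =>
    intro j hj hlj
    have hjn : j < n := by omega
    rw [kprodFrom_succ A j hjn, ← mulVec_mulVec]
    have : A ⟨j, hjn⟩ = Kop a b φ 0 := by
      rw [hA ⟨j, hjn⟩, if_neg]; simp only [Fin.val_mk]; omega
    rw [this, K0_ket0, ih (j+1) (by omega) (by omega)]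

lemma Fket1_high (hA : ∀ m : Fin n, A m = Kop a b φ (if (m : ℕ) + 1 = l then 1 else 0)) :
    ∀ k j, j + k = n → l ≤ j → (kprodFrom A j) *ᵥ ket1 = ((a : ℂ) ^ k) • ket1 := by
  intro k
  induction k with
  | zero =>
    intro j hj _
    rw [show j = n by omega, kprodFrom_last, one_mulVec, pow_zero, one_smul]
  | succ k ih =>
    intro j hj hlj
    have hjn : j < n := by omega
    rw [kprodFrom_succ A j hjn, ← mulVec_mulVec]
    have : A ⟨j, hjn⟩ = Kop a b φ 0 := by
      rw [hA ⟨j, hjn⟩, if_neg]; simp only [Fin.val_mk]; omega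
    rw [this, K0_ket1, mulVec_smul, ih (j+1) (by omega) (by omega), smul_smul,
      ← pow_succ']

lemma Fket1_low (hA : ∀ m : Fin n, A m = Kop a b φ (if (m : ℕ) + 1 = l then 1 else 0))
    (hln : l ≤ n) :
    ∀ k j, j + k + 1 = l →
      (kprodFrom A j) *ᵥ ket1
        = (((a : ℂ) ^ k) * ((b : ℂ) * Complex.exp (Complex.I * φ))) • ket0 := by
  intro k
  induction k with
  | zero =>
    intro j hj
    have hjn : j < n := by omega
    rw [kprodFrom_succ A j hjn, ← mulVec_mulVec]
    have : A ⟨j, hjn⟩ = Kop a b φ 1 := by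
      rw [hA ⟨j, hjn⟩, if_pos]; simp only [Fin.val_mk]; omega
    rw [this, K1_ket1, mulVec_smul, Fket0 hA (n - (j+1)) (j+1) (by omega) (by omega)]
    simp
  | succ k ih =>
    intro j hj
    have hjn : j < n := by omega
    rw [kprodFrom_succ A j hjn, ← mulVec_mulVec]
    have : A ⟨j, hjn⟩ = Kop a b φ 0 := by
      rw [hA ⟨j, hjn⟩, if_neg]; simp only [Fin.val_mk]; omega
    rw [this, K0_ket1, mulVec_smul, ih (j+1) (by omega), smul_smul]
    ring_nf

end model

/-- single-excitation derivative vector. For the outcome string with a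
single `1` in position `l` (`2 ≤ l ≤ n`, positions counted from `1`),
`∑ⱼ K_{iₙ}⋯K̇_{i_j}⋯K_{i_1}|0⟩ = i b e^{iφ} (1-a^{l-1})/(1-a) |0⟩ + a^{n-l}|1⟩`,
whose squared norm is `b²((1-a^{l-1})/(1-a))² + a^{2(n-l)}`. -/
theorem single_excitation_vector
    (lam : ℝ) (hlam0 : 0 < lam) (hlam1 : lam < 1)
    (a b φ : ℝ) (ha : a = Real.sqrt (1 - lam)) (hb : b = Real.sqrt lam)
    (n l : ℕ) (hl2 : 2 ≤ l) (hln : l ≤ n)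
    -- the outcome string: `i_m = 1` iff `m = l` (1-indexed); 0-indexed position `m`
    (g : Fin n → Fin 2) (hg : ∀ m : Fin n, g m = if (m : ℕ) + 1 = l then 1 else 0)
    (dv : Fin 2 → ℂ)
    (hdv : dv = ∑ j : Fin n,
      (kprodFrom (fun m : Fin n => Kop a b φ (g m)) ((j : ℕ) + 1)
        * Kdop a (g j)
        * kprodTo (fun m : Fin n => Kop a b φ (g m)) (j : ℕ)).mulVec ket0) :
    dv = (fun i : Fin 2 =>
        if i = 0 then
          Complex.I * b * Complex.exp (Complex.I * φ) * (1 - (a : ℂ) ^ (l - 1)) / (1 - (a : ℂ))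
        else (a : ℂ) ^ (n - l)) ∧
    nsq dv = b ^ 2 * ((1 - a ^ (l - 1)) / (1 - a)) ^ 2 + a ^ (2 * (n - l)) := by
  have hl1 : 1 ≤ l := by omega
  set A : Fin n → Matrix (Fin 2) (Fin 2) ℂ := fun m : Fin n => Kop a b φ (g m) with hAdef
  have hA : ∀ m : Fin n, A m = Kop a b φ (if (m : ℕ) + 1 = l then 1 else 0) := by
    intro m; rw [hAdef]; simp only []; rw [hg m]
  have ha0 : 0 ≤ a := by rw [ha]; exact Real.sqrt_nonneg _
  have ha1 : a < 1 := by
    rw [ha]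
    calc Real.sqrt (1 - lam) < Real.sqrt 1 := by
          apply Real.sqrt_lt_sqrt (by linarith) (by linarith)
      _ = 1 := Real.sqrt_one
  have haC : (a : ℂ) ≠ 1 := by
    intro h; exact absurd (by exact_mod_cast h) (ne_of_lt ha1)
  have h1a : (1 : ℂ) - (a : ℂ) ≠ 0 := by
    intro h; apply haC; linear_combination -h
  have h1a' : (a : ℂ) - 1 ≠ 0 := by
    intro h; apply haC; linear_combination h
  have hterm : ∀ j : Fin n,
      (kprodFrom A ((j : ℕ) + 1) * Kdop a (g j) * kprodTo A (j : ℕ)) *ᵥ ket0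
        = if (j : ℕ) + 1 < l then
            (Complex.I * ((a : ℂ) ^ (l - 2 - (j : ℕ))
              * ((b : ℂ) * Complex.exp (Complex.I * φ)))) • ket0
          else if (j : ℕ) + 1 = l then ((a : ℂ) ^ (n - l)) • ket1
          else 0 := by
    intro j
    rw [← mulVec_mulVec, ← mulVec_mulVec]
    by_cases h1 : (j : ℕ) + 1 < l
    · rw [if_pos h1, Tket0 hA (j : ℕ) (le_of_lt j.isLt) (by omega)]
      have hg0 : g j = 0 := by rw [hg j, if_neg]; omega
      rw [hg0, Kd0_ket0, mulVec_smul,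
        Fket1_low hA hln (l - 2 - (j : ℕ)) ((j : ℕ) + 1) (by omega), smul_smul]
    · by_cases h2 : (j : ℕ) + 1 = l
      · rw [if_neg h1, if_pos h2, Tket0 hA (j : ℕ) (le_of_lt j.isLt) (by omega)]
        have hg1 : g j = 1 := by rw [hg j, if_pos h2]
        rw [hg1, Kd1_ket0, Fket1_high hA (n - l) ((j : ℕ) + 1) (by omega) (by omega)]
      · rw [if_neg h1, if_neg h2,
          Tzero hA hl1 (j : ℕ) (by omega) (le_of_lt j.isLt), mulVec_zero, mulVec_zero]
  have hdv' : dv = ∑ j : Fin n,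
      (if (j : ℕ) + 1 < l then
          (Complex.I * ((a : ℂ) ^ (l - 2 - (j : ℕ))
            * ((b : ℂ) * Complex.exp (Complex.I * φ)))) • ket0
        else if (j : ℕ) + 1 = l then ((a : ℂ) ^ (n - l)) • ket1
        else 0) := by
    rw [hdv]; exact Finset.sum_congr rfl (fun j _ => hterm j)
  -- component 0
  set f : ℕ → ℂ := fun m => if m + 1 < l then
      Complex.I * ((a : ℂ) ^ (l - 2 - m) * ((b : ℂ) * Complex.exp (Complex.I * φ)))
    else 0 with hf
  have hdv0 : dv 0 = Complex.I * b * Complex.exp (Complex.I * φ)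
      * (1 - (a : ℂ) ^ (l - 1)) / (1 - (a : ℂ)) := by
    rw [hdv', Finset.sum_apply]
    have hc : ∀ j : Fin n,
        ((if (j : ℕ) + 1 < l then
            (Complex.I * ((a : ℂ) ^ (l - 2 - (j : ℕ))
              * ((b : ℂ) * Complex.exp (Complex.I * φ)))) • ket0
          else if (j : ℕ) + 1 = l then ((a : ℂ) ^ (n - l)) • ket1
          else 0) : Fin 2 → ℂ) 0 = f (j : ℕ) := by
      intro j
      rw [hf]
      by_cases h1 : (j : ℕ) + 1 < l
      · simp [h1, ket0]
      · by_cases h2 : (j : ℕ) + 1 = l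
        · simp [h1, h2, ket1]
        · simp [h1, h2]
    rw [Finset.sum_congr rfl (fun j _ => hc j), Fin.sum_univ_eq_sum_range f n]
    rw [← Finset.sum_subset (Finset.range_subset_range.2 (show l - 1 ≤ n by omega))
      (by intro x _ hx; rw [hf]; simp only []; rw [if_neg]; simp at hx; omega)]
    have hpos : ∀ x ∈ Finset.range (l - 1),
        f x = Complex.I * ((a : ℂ) ^ (l - 1 - 1 - x)
          * ((b : ℂ) * Complex.exp (Complex.I * φ))) := by
      intro x hx; simp at hx
      rw [hf]; simp only []; rw [if_pos (by omega)]
      congr 2 <;> omega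
    rw [Finset.sum_congr rfl hpos,
      Finset.sum_range_reflect (fun k => Complex.I
        * ((a : ℂ) ^ k * ((b : ℂ) * Complex.exp (Complex.I * φ)))) (l - 1)]
    have hsum : ∑ k ∈ Finset.range (l - 1),
        Complex.I * ((a : ℂ) ^ k * ((b : ℂ) * Complex.exp (Complex.I * φ)))
        = (Complex.I * ((b : ℂ) * Complex.exp (Complex.I * φ)))
          * ∑ k ∈ Finset.range (l - 1), (a : ℂ) ^ k := by
      rw [Finset.mul_sum]
      exact Finset.sum_congr rfl (fun k _ => by ring)
    rw [hsum, geom_sum_eq haC]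
    field_simp
    ring
  -- component 1
  have hln' : l - 1 < n := by omega
  have hdv1 : dv 1 = (a : ℂ) ^ (n - l) := by
    rw [hdv', Finset.sum_apply]
    have hc : ∀ j : Fin n,
        ((if (j : ℕ) + 1 < l then
            (Complex.I * ((a : ℂ) ^ (l - 2 - (j : ℕ))
              * ((b : ℂ) * Complex.exp (Complex.I * φ)))) • ket0
          else if (j : ℕ) + 1 = l then ((a : ℂ) ^ (n - l)) • ket1
          else 0) : Fin 2 → ℂ) 1
        = if j = (⟨l - 1, hln'⟩ : Fin n) then (a : ℂ) ^ (n - l) else 0 := by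
      intro j
      by_cases h2 : (j : ℕ) + 1 = l
      · have hj : j = (⟨l - 1, hln'⟩ : Fin n) := by
          apply Fin.ext; simp; omega
        have h1 : ¬ ((j : ℕ) + 1 < l) := by omega
        rw [if_neg h1, if_pos h2, if_pos hj]
        simp [ket1]
      · have hj : ¬ j = (⟨l - 1, hln'⟩ : Fin n) := by
          intro h; apply h2; rw [h]; simp; omega
        by_cases h1 : (j : ℕ) + 1 < l
        · simp [h1, hj, ket0]
        · simp [h1, h2, hj]
    rw [Finset.sum_congr rfl (fun j _ => hc j), Finset.sum_ite_eq' Finset.univ]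
    simp
  refine ⟨?_, ?_⟩
  · funext i
    fin_cases i
    · simpa using hdv0
    · simpa using hdv1
  · have hns0 : Complex.normSq (dv 0) = b ^ 2 * ((1 - a ^ (l - 1)) / (1 - a)) ^ 2 := by
      rw [hdv0]
      have h1aR : (1 : ℝ) - a ≠ 0 := by intro h; linarith
      have hrw : Complex.I * ↑b * Complex.exp (Complex.I * ↑φ) * (1 - (a : ℂ) ^ (l - 1))
            / (1 - (a : ℂ))
          = (Complex.I * Complex.exp (Complex.I * ↑φ))
            * (((b * ((1 - a ^ (l - 1)) / (1 - a))) : ℝ) : ℂ) := by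
        push_cast
        field_simp
      rw [hrw, Complex.normSq_mul, Complex.normSq_mul, Complex.normSq_I,
        Complex.normSq_ofReal, Complex.normSq_eq_norm_sq, Complex.norm_exp]
      simp [Complex.mul_re]
      ring
    have hns1 : Complex.normSq (dv 1) = a ^ (2 * (n - l)) := by
      rw [hdv1,
        show ((a : ℂ) ^ (n - l)) = (((a ^ (n - l)) : ℝ) : ℂ) by push_cast; ring,
        Complex.normSq_ofReal, two_mul, pow_add]
    rw [show nsq dv = Complex.normSq (dv 0) + Complex.normSq (dv 1) by
        simp [nsq, Fin.sum_univ_two], hns0, hns1]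
end
end
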